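/- arXiv:math/0210293 — 4 statements merged into one kernel-verified Lean document; each statement's English description precedes it below -/
import Mathlib

section
/- Fix 1 < p < ∞ and q = p/(p−1), let Y ⊂ ℝ^n be a bounded open set of finite positive measure, let ξ ∈ ℝ^n and c > 0. Let V ∈ L^p(Y; ℝ^n) and let A : Y → ℝ^n be measurable such that, for a.e. x ∈ Y: |ξ + V(x)|^p ≤ c (1 + (A(x), ξ + V(x))) and |A(x)| ≤ c (1 + |ξ + V(x)|^{p−1}), and suppose the orthogonality relation ∫_Y (A(x), V(x)) dx = 0 holds. Then there exists a constant C > 0, depending only on c, p, |Y| and |ξ|, such that ∫_Y |ξ + V(x)|^p dx ≤ C. -/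
open MeasureTheory
open scoped RealInnerProductSpace

/-!
Pointwise, the term `(A, ξ)` in the coercivity bound is controlled by the growth bound through
`c |ξ| (1 + |ξ + V|^{p-1})`, and Young's inequality `t^{p-1} ≤ ε t^p + ε^{1-p}` with `ε` small
lets the resulting `|ξ + V|^p` be absorbed into the left-hand side. What remains is
`|ξ + V|^p ≤ B + 2c (A, V)` with `B` depending only on `c, p, |ξ|`; integrating over `Y` and
using the orthogonality relation gives `∫_Y |ξ + V|^p ≤ B |Y|`.
-/

lemma rpow_sub_one_le_mul_rpow_add {p ε a : ℝ} (hp : 1 ≤ p) (hε : 0 < ε) (ha : 0 ≤ a) :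
    a ^ (p - 1) ≤ ε * a ^ p + ε ^ (1 - p) := by
  have hpow : 0 ≤ a ^ (p - 1) := Real.rpow_nonneg ha _
  rcases le_or_gt a ε⁻¹ with hsmall | hlarge
  · have hεa : a ^ (p - 1) ≤ ε ^ (1 - p) := by
      calc a ^ (p - 1) ≤ ε⁻¹ ^ (p - 1) := Real.rpow_le_rpow ha hsmall (by linarith)
        _ = ε ^ (1 - p) := by
          rw [Real.inv_rpow hε.le, ← Real.rpow_neg hε.le, neg_sub]
    have : 0 ≤ ε * a ^ p := mul_nonneg hε.le (Real.rpow_nonneg ha _)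
    linarith
  · have ha0 : 0 < a := (inv_pos.mpr hε).trans hlarge
    have hεa : 1 ≤ ε * a := by
      simpa [hε.ne'] using (mul_lt_mul_of_pos_left hlarge hε).le
    have : a ^ (p - 1) ≤ ε * a ^ p := by
      calc a ^ (p - 1) ≤ (ε * a) * a ^ (p - 1) := le_mul_of_one_le_left hpow hεa
        _ = ε * a ^ p := by
          rw [mul_assoc, ← Real.rpow_one_add' ha0.le (by linarith), add_sub_cancel]
    linarith [Real.rpow_nonneg hε.le (1 - p)]

/-- The Young parameter `ε` chosen so that `c² r ε ≤ 1/2`. -/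
noncomputable def absorptionWeight (c r : ℝ) : ℝ := (2 * (c ^ 2 * r + 1))⁻¹

noncomputable def energyDensityBound (c p r : ℝ) : ℝ :=
  2 * (c + c ^ 2 * r * (1 + absorptionWeight c r ^ (1 - p)))

section Pointwise

variable {F : Type*} [NormedAddCommGroup F] [InnerProductSpace ℝ F]

lemma norm_rpow_le_energyDensityBound {p c : ℝ} (hp : 1 ≤ p) (hc : 0 ≤ c) {ξ v a : F}
    (hcoer : ‖ξ + v‖ ^ p ≤ c * (1 + ⟪a, ξ + v⟫))
    (hgrowth : ‖a‖ ≤ c * (1 + ‖ξ + v‖ ^ (p - 1))) :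
    ‖ξ + v‖ ^ p ≤ energyDensityBound c p ‖ξ‖ + 2 * c * ⟪a, v⟫ := by
  set t := ‖ξ + v‖
  set r := ‖ξ‖
  set ε := absorptionWeight c r
  set D := ε ^ (1 - p)
  have hr : 0 ≤ r := norm_nonneg _
  have hε : 0 < ε := by unfold ε absorptionWeight; positivity
  have hK : 0 ≤ c ^ 2 * r := by positivity
  have hKε : c ^ 2 * r * ε ≤ 1 / 2 := by
    unfold ε absorptionWeight
    rw [mul_inv_le_iff₀ (by positivity)]
    linarith
  have hyoung : t ^ (p - 1) ≤ ε * t ^ p + D :=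
    rpow_sub_one_le_mul_rpow_add hp hε (norm_nonneg _)
  have hξterm : ⟪a, ξ⟫ ≤ c * r * (1 + ε * t ^ p + D) :=
    calc ⟪a, ξ⟫ ≤ ‖a‖ * r := real_inner_le_norm _ _
      _ ≤ c * (1 + t ^ (p - 1)) * r := mul_le_mul_of_nonneg_right hgrowth hr
      _ ≤ c * (1 + (ε * t ^ p + D)) * r := by gcongr
      _ = c * r * (1 + ε * t ^ p + D) := by ring
  have habsorb : c ^ 2 * r * ε * t ^ p ≤ t ^ p / 2 := by
    nlinarith [Real.rpow_nonneg (norm_nonneg (ξ + v)) p]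
  rw [inner_add_right] at hcoer
  unfold energyDensityBound
  nlinarith [mul_le_mul_of_nonneg_left hξterm hc]

end Pointwise

lemma integral_norm_rpow_le_of_orthogonal {α F : Type*} [MeasurableSpace α] {μ : Measure α}
    [IsFiniteMeasure μ] [NormedAddCommGroup F] [InnerProductSpace ℝ F] {p c : ℝ} (hp : 1 ≤ p)
    (hc : 0 ≤ c) {ξ : F} {V A : α → F}
    (hint : Integrable (fun x => ‖ξ + V x‖ ^ p) μ)
    (hcoer : ∀ᵐ x ∂μ, ‖ξ + V x‖ ^ p ≤ c * (1 + ⟪A x, ξ + V x⟫))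
    (hgrowth : ∀ᵐ x ∂μ, ‖A x‖ ≤ c * (1 + ‖ξ + V x‖ ^ (p - 1)))
    (hAV : Integrable (fun x => ⟪A x, V x⟫) μ) (horth : ∫ x, ⟪A x, V x⟫ ∂μ = 0) :
    ∫ x, ‖ξ + V x‖ ^ p ∂μ ≤ energyDensityBound c p ‖ξ‖ * μ.real Set.univ := by
  have hbound : Integrable (fun x => energyDensityBound c p ‖ξ‖ + 2 * c * ⟪A x, V x⟫) μ :=
    (integrable_const _).add (hAV.const_mul _)
  calc ∫ x, ‖ξ + V x‖ ^ p ∂μ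
      ≤ ∫ x, (energyDensityBound c p ‖ξ‖ + 2 * c * ⟪A x, V x⟫) ∂μ := by
        refine integral_mono_ae hint hbound ?_
        filter_upwards [hcoer, hgrowth] with x hx₁ hx₂
        exact norm_rpow_le_energyDensityBound hp hc hx₁ hx₂
    _ = energyDensityBound c p ‖ξ‖ * μ.real Set.univ := by
        rw [integral_add (integrable_const _) (hAV.const_mul _), integral_const_mul, horth,
          integral_const, smul_eq_mul]
        ring

theorem energy_bound_of_orthogonality_general
    {n : ℕ} (p : ℝ) (hp : 1 < p)
    (Y : Set (EuclideanSpace ℝ (Fin n)))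
    (hYbdd : Bornology.IsBounded Y) (hYpos : 0 < volume Y)
    (ξ : EuclideanSpace ℝ (Fin n)) (c : ℝ) (hc : 0 < c) :
    ∃ C : ℝ, 0 < C ∧
      ∀ (V A : EuclideanSpace ℝ (Fin n) → EuclideanSpace ℝ (Fin n)),
        MemLp V (ENNReal.ofReal p) (volume.restrict Y) →
        AEStronglyMeasurable A (volume.restrict Y) →
        (∀ᵐ x ∂volume.restrict Y, ‖ξ + V x‖ ^ p ≤ c * (1 + ⟪A x, ξ + V x⟫)) →
        (∀ᵐ x ∂volume.restrict Y, ‖A x‖ ≤ c * (1 + ‖ξ + V x‖ ^ (p - 1))) →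
        Integrable (fun x => ⟪A x, V x⟫) (volume.restrict Y) →
        (∫ x in Y, ⟪A x, V x⟫) = 0 →
        (∫ x in Y, ‖ξ + V x‖ ^ p) ≤ C := by
  have hYfin : volume Y < ⊤ := hYbdd.measure_lt_top
  have : IsFiniteMeasure (volume.restrict Y) := isFiniteMeasure_restrict.mpr hYfin.ne
  have hB : 0 < energyDensityBound c p ‖ξ‖ := by
    unfold energyDensityBound absorptionWeight; positivity
  have hY : 0 < volume.real Y := ENNReal.toReal_pos hYpos.ne' hYfin.ne
  refine ⟨energyDensityBound c p ‖ξ‖ * volume.real Y, by positivity, ?_⟩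
  intro V A hV _ hcoer hgrowth hAV horth
  have hint : Integrable (fun x => ‖ξ + V x‖ ^ p) (volume.restrict Y) := by
    simpa [ENNReal.toReal_ofReal (by linarith : 0 ≤ p)] using
      ((memLp_const ξ).add hV).integrable_norm_rpow (by simp; linarith) ENNReal.ofReal_ne_top
  simpa using integral_norm_rpow_le_of_orthogonal hp.le hc.le hint hcoer hgrowth hAV horth

/-- A priori energy bound: if `V ∈ L^p(Y;ℝⁿ)`, `A : Y → ℝⁿ` is
measurable, `|ξ + V|^p ≤ c (1 + (A, ξ + V))` and `|A| ≤ c (1 + |ξ + V|^{p−1})` a.e.,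
and `∫_Y (A, V) dx = 0`, then `∫_Y |ξ + V|^p dx ≤ C` with `C` depending only on
`c, p, |Y|, |ξ|`. -/
theorem energy_bound_of_orthogonality
    {n : ℕ} (p q : ℝ) (hp : 1 < p) (hq : q = p / (p - 1))
    (Y : Set (EuclideanSpace ℝ (Fin n))) (hYopen : IsOpen Y)
    (hYbdd : Bornology.IsBounded Y) (hYpos : 0 < volume Y)
    (ξ : EuclideanSpace ℝ (Fin n)) (c : ℝ) (hc : 0 < c) :
    ∃ C : ℝ, 0 < C ∧
      ∀ (V A : EuclideanSpace ℝ (Fin n) → EuclideanSpace ℝ (Fin n)),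
        MemLp V (ENNReal.ofReal p) (volume.restrict Y) →
        AEStronglyMeasurable A (volume.restrict Y) →
        (∀ᵐ x ∂volume.restrict Y, ‖ξ + V x‖ ^ p ≤ c * (1 + ⟪A x, ξ + V x⟫)) →
        (∀ᵐ x ∂volume.restrict Y, ‖A x‖ ≤ c * (1 + ‖ξ + V x‖ ^ (p - 1))) →
        Integrable (fun x => ⟪A x, V x⟫) (volume.restrict Y) →
        (∫ x in Y, ⟪A x, V x⟫) = 0 →
        (∫ x in Y, ‖ξ + V x‖ ^ p) ≤ C :=
  energy_bound_of_orthogonality_general p hp Y hYbdd hYpos ξ c hc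
end

section
/- Fix 1 < p < ∞, let Z ⊂ ℝ^n be a bounded open rectangle, and fix y ∈ ℝ^n. Let a : ℝ^n × ℝ^n × ℝ^n → ℝ^n satisfy, for a.e. z ∈ ℝ^n and all ξ, ξ_1, ξ_2 ∈ ℝ^n: a(y,z,0) = 0, |a(y,z,ξ_1) − a(y,z,ξ_2)| ≤ c_1 (1 + |ξ_1| + |ξ_2|)^{p−1−α} |ξ_1 − ξ_2|^α, and (a(y,z,ξ_1) − a(y,z,ξ_2), ξ_1 − ξ_2) ≥ c_2 (1 + |ξ_1| + |ξ_2|)^{p−β} |ξ_1 − ξ_2|^β, with c_1, c_2 > 0, 0 ≤ α ≤ min{1, p−1}, max{p, 2} ≤ β < ∞. Let τ ∈ ℝ^n and let V ∈ L^p(Z; ℝ^n) satisfy ∫_Z (a(y, z, τ + V(z)), V(z)) dz = 0. Then there exists a constant c > 0, depending only on c_1, c_2, p, α, β and |Z| (and in particular independent of τ and y), such that ∫_Z |τ + V(z)|^p dz ≤ c (1 + |τ|^p). -/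
/-!
Write `W = τ + V`. Testing the structure conditions against `ξ₂ = 0` gives the coercivity
`⟪a(W), W⟫ ≥ K |W|^p - c₂` with `K = c₂ 2^(p-β)` and the growth `|a(W)| ≤ c₁ (1 + |W|)^(p-1)`.
Splitting `⟪a(W), W⟫ = ⟪a(W), τ⟫ + ⟪a(W), V⟫` and bounding `⟪a(W), τ⟫` by Young's inequality
with weight `K / 2` yields the pointwise estimate `|W|^p ≤ κ ⟪a(W), V⟫ + C (1 + |τ|^p)` with
`κ, C` depending only on `c₁, c₂, p, β`. Integrating over `Z`, the orthogonality relation kills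
the first term and `|Z| < ∞` bounds the second.
-/

open MeasureTheory Set
open scoped RealInnerProductSpace

namespace Real

lemma one_add_rpow_le_two_rpow_mul {t r : ℝ} (ht : 0 ≤ t) (hr : 0 ≤ r) :
    (1 + t) ^ r ≤ 2 ^ r * (1 + t ^ r) := by
  have h2r : (0 : ℝ) ≤ 2 ^ r := rpow_nonneg zero_le_two r
  have htr : 0 ≤ t ^ r := rpow_nonneg ht r
  rcases le_total t 1 with h | h
  · calc (1 + t) ^ r ≤ 2 ^ r := rpow_le_rpow (by linarith) (by linarith) hr
      _ ≤ 2 ^ r * (1 + t ^ r) := le_mul_of_one_le_right h2r (by linarith)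
  · calc (1 + t) ^ r ≤ (2 * t) ^ r := rpow_le_rpow (by linarith) (by linarith) hr
      _ = 2 ^ r * t ^ r := mul_rpow zero_le_two ht
      _ ≤ 2 ^ r * (1 + t ^ r) := by gcongr; linarith

lemma rpow_le_one_add_rpow {t q r : ℝ} (ht : 0 ≤ t) (hq : 0 ≤ q) (hqr : q ≤ r) :
    t ^ q ≤ 1 + t ^ r := by
  rcases le_total t 1 with h | h
  · linarith [rpow_le_one ht h hq, rpow_nonneg ht r]
  · linarith [rpow_le_rpow_of_exponent_le h hqr]

lemma two_rpow_mul_rpow_sub_one_le {t p β : ℝ} (ht : 0 ≤ t) (hp : 0 ≤ p) (hpβ : p ≤ β) :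
    2 ^ (p - β) * t ^ p - 1 ≤ (1 + t) ^ (p - β) * t ^ β := by
  rcases le_total t 1 with h | h
  · have h2 : (2 : ℝ) ^ (p - β) ≤ 1 := rpow_le_one_of_one_le_of_nonpos one_le_two (by linarith)
    have hrhs : 0 ≤ (1 + t) ^ (p - β) * t ^ β := by positivity
    nlinarith [rpow_le_one ht h hp, rpow_nonneg ht p]
  · have ht0 : 0 < t := zero_lt_one.trans_le h
    calc 2 ^ (p - β) * t ^ p - 1 ≤ 2 ^ (p - β) * t ^ p := by linarith
      _ = (2 * t) ^ (p - β) * t ^ β := by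
        rw [mul_rpow zero_le_two ht, mul_assoc, ← rpow_add ht0, sub_add_cancel]
      _ ≤ (1 + t) ^ (p - β) * t ^ β := mul_le_mul_of_nonneg_right
        (rpow_le_rpow_of_nonpos (by positivity) (by linarith) (by linarith)) (rpow_nonneg ht β)

/-- Weighted Young inequality: according as `s ≤ δ t` or `δ t ≤ s`, one of the two terms
on the right dominates the left. -/
lemma mul_rpow_sub_one_le {p s t δ : ℝ} (hp : 1 < p) (hs : 0 ≤ s) (ht : 0 ≤ t) (hδ : 0 < δ) :
    s * t ^ (p - 1) ≤ δ * t ^ p + δ ^ (1 - p) * s ^ p := by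
  have hδs : 0 ≤ δ ^ (1 - p) * s ^ p := by positivity
  have hδt : 0 ≤ δ * t ^ p := by positivity
  rcases ht.eq_or_lt with rfl | ht0
  · rw [zero_rpow (by linarith)]; linarith
  rcases le_total s (δ * t) with h | h
  · calc s * t ^ (p - 1) ≤ δ * t * t ^ (p - 1) := by gcongr
      _ = δ * t ^ p := by rw [mul_assoc, ← rpow_one_add' ht0.le (by linarith), add_sub_cancel]
      _ ≤ _ := le_add_of_nonneg_right hδs
  · calc s * t ^ (p - 1) ≤ s * (s / δ) ^ (p - 1) := by
          gcongr
          rwa [le_div_iff₀ hδ, mul_comm]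
      _ = δ ^ (1 - p) * s ^ p := by
        rw [div_rpow hs hδ.le, show 1 - p = -(p - 1) by ring, rpow_neg hδ.le,
          show s ^ p = s * s ^ (p - 1) by rw [← rpow_one_add' hs (by linarith), add_sub_cancel]]
        field_simp
      _ ≤ _ := le_add_of_nonneg_left hδt

end Real

section StructureConditions

variable {E : Type*} [NormedAddCommGroup E]

def GrowthCondition (A : E → E) (c₁ p α : ℝ) : Prop :=
  ∀ ξ₁ ξ₂ : E, ‖A ξ₁ - A ξ₂‖ ≤ c₁ * (1 + ‖ξ₁‖ + ‖ξ₂‖) ^ (p - 1 - α) * ‖ξ₁ - ξ₂‖ ^ α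

variable {A : E → E} {c₁ c₂ p α β : ℝ}

lemma GrowthCondition.norm_le (hA : GrowthCondition A c₁ p α) (h0 : A 0 = 0)
    (hc₁ : 0 ≤ c₁) (hα : 0 ≤ α) (ξ : E) : ‖A ξ‖ ≤ c₁ * (1 + ‖ξ‖) ^ (p - 1) := by
  have hξ : 0 < 1 + ‖ξ‖ := by positivity
  calc ‖A ξ‖ ≤ c₁ * (1 + ‖ξ‖) ^ (p - 1 - α) * ‖ξ‖ ^ α := by
        simpa [h0] using hA ξ 0
    _ ≤ c₁ * (1 + ‖ξ‖) ^ (p - 1 - α) * (1 + ‖ξ‖) ^ α := by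
        gcongr
        linarith
    _ = c₁ * (1 + ‖ξ‖) ^ (p - 1) := by
        rw [mul_assoc, ← Real.rpow_add hξ, sub_add_cancel]

variable [InnerProductSpace ℝ E]

lemma GrowthCondition.inner_le (hA : GrowthCondition A c₁ p α) (h0 : A 0 = 0)
    (hc₁ : 0 ≤ c₁) (hα : 0 ≤ α) (hp : 1 ≤ p) (ξ τ : E) :
    ⟪A ξ, τ⟫ ≤ c₁ * 2 ^ (p - 1) * ‖τ‖ * (1 + ‖ξ‖ ^ (p - 1)) :=
  calc ⟪A ξ, τ⟫ ≤ ‖A ξ‖ * ‖τ‖ := real_inner_le_norm _ _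
    _ ≤ c₁ * (1 + ‖ξ‖) ^ (p - 1) * ‖τ‖ := by gcongr; exact hA.norm_le h0 hc₁ hα ξ
    _ ≤ c₁ * (2 ^ (p - 1) * (1 + ‖ξ‖ ^ (p - 1))) * ‖τ‖ := by
        gcongr
        exact Real.one_add_rpow_le_two_rpow_mul (norm_nonneg ξ) (by linarith)
    _ = c₁ * 2 ^ (p - 1) * ‖τ‖ * (1 + ‖ξ‖ ^ (p - 1)) := by ring

def MonotonicityCondition (A : E → E) (c₂ p β : ℝ) : Prop :=
  ∀ ξ₁ ξ₂ : E, ⟪A ξ₁ - A ξ₂, ξ₁ - ξ₂⟫ ≥ c₂ * (1 + ‖ξ₁‖ + ‖ξ₂‖) ^ (p - β) * ‖ξ₁ - ξ₂‖ ^ β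

lemma MonotonicityCondition.inner_self_ge (hA : MonotonicityCondition A c₂ p β) (h0 : A 0 = 0)
    (hc₂ : 0 ≤ c₂) (hp : 0 ≤ p) (hpβ : p ≤ β) (ξ : E) :
    c₂ * 2 ^ (p - β) * ‖ξ‖ ^ p - c₂ ≤ ⟪A ξ, ξ⟫ :=
  calc c₂ * 2 ^ (p - β) * ‖ξ‖ ^ p - c₂ = c₂ * (2 ^ (p - β) * ‖ξ‖ ^ p - 1) := by ring
    _ ≤ c₂ * ((1 + ‖ξ‖) ^ (p - β) * ‖ξ‖ ^ β) := by
        gcongr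
        exact Real.two_rpow_mul_rpow_sub_one_le (norm_nonneg ξ) hp hpβ
    _ ≤ ⟪A ξ, ξ⟫ := by simpa [h0, mul_assoc] using hA ξ 0

theorem exists_rpow_norm_add_le_inner_add (hp : 1 < p) (hc₁ : 0 ≤ c₁) (hc₂ : 0 < c₂)
    (hα : 0 ≤ α) (hpβ : p ≤ β) :
    ∃ κ C : ℝ, 0 < κ ∧ 0 ≤ C ∧ ∀ A : E → E, A 0 = 0 → GrowthCondition A c₁ p α →
      MonotonicityCondition A c₂ p β → ∀ τ v : E,
        ‖τ + v‖ ^ p ≤ κ * ⟪A (τ + v), v⟫ + C * (1 + ‖τ‖ ^ p) := by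
  set K := c₂ * 2 ^ (p - β)
  set M := c₁ * 2 ^ (p - 1)
  set D := (K / 2) ^ (1 - p) * M ^ p
  have hK : 0 < K := by positivity
  have hM : 0 ≤ M := by positivity
  have hD : 0 ≤ D := by positivity
  refine ⟨2 / K, 2 / K * (c₂ + M + D), by positivity, by positivity,
    fun A h0 hgrow hmon τ v => ?_⟩
  set ξ := τ + v
  have hlow : K * ‖ξ‖ ^ p - c₂ ≤ ⟪A ξ, τ⟫ + ⟪A ξ, v⟫ := by
    rw [← inner_add_right]; exact hmon.inner_self_ge h0 hc₂.le (by linarith) hpβ ξ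
  -- Young's inequality with weight `K / 2` lets the left side absorb the `‖ξ‖ ^ p` term.
  have hup : ⟪A ξ, τ⟫ ≤ M * ‖τ‖ + K / 2 * ‖ξ‖ ^ p + D * ‖τ‖ ^ p :=
    calc ⟪A ξ, τ⟫ ≤ M * ‖τ‖ * (1 + ‖ξ‖ ^ (p - 1)) := hgrow.inner_le h0 hc₁ hα hp.le ξ τ
      _ = M * ‖τ‖ + M * ‖τ‖ * ‖ξ‖ ^ (p - 1) := by ring
      _ ≤ M * ‖τ‖ + (K / 2 * ‖ξ‖ ^ p + (K / 2) ^ (1 - p) * (M * ‖τ‖) ^ p) := by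
        gcongr
        exact Real.mul_rpow_sub_one_le hp (by positivity) (norm_nonneg ξ) (by positivity)
      _ = M * ‖τ‖ + K / 2 * ‖ξ‖ ^ p + D * ‖τ‖ ^ p := by
        rw [Real.mul_rpow hM (norm_nonneg τ)]; ring
  have hτ : ‖τ‖ ≤ 1 + ‖τ‖ ^ p := by
    simpa using Real.rpow_le_one_add_rpow (norm_nonneg τ) zero_le_one hp.le
  have hτp : 0 ≤ ‖τ‖ ^ p := by positivity
  have habsorb : K / 2 * ‖ξ‖ ^ p ≤ ⟪A ξ, v⟫ + (c₂ + M + D) * (1 + ‖τ‖ ^ p) := by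
    nlinarith [mul_le_mul_of_nonneg_left hτ hM, mul_nonneg hc₂.le hτp, mul_nonneg hD hτp]
  calc ‖ξ‖ ^ p = 2 / K * (K / 2 * ‖ξ‖ ^ p) := by field_simp
    _ ≤ 2 / K * (⟪A ξ, v⟫ + (c₂ + M + D) * (1 + ‖τ‖ ^ p)) := by gcongr
    _ = 2 / K * ⟪A ξ, v⟫ + 2 / K * (c₂ + M + D) * (1 + ‖τ‖ ^ p) := by ring

end StructureConditions

theorem MeasureTheory.integral_le_measureReal_mul_of_ae_le_mul_add {X : Type*}
    [MeasurableSpace X] {μ : Measure X} [IsFiniteMeasure μ] {f g : X → ℝ} {κ b : ℝ}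
    (hf : Integrable f μ) (hg : Integrable g μ) (hf0 : ∫ x, f x ∂μ = 0) (hgf : ∀ᵐ x ∂μ, g x ≤ κ * f x + b) :
    ∫ x, g x ∂μ ≤ μ.real univ * b := by
  have hrhs : Integrable (fun x => κ * f x + b) μ := (hf.const_mul κ).add (integrable_const b)
  have := integral_mono_ae hg hrhs hgf
  rwa [integral_add (hf.const_mul κ) (integrable_const b), integral_const_mul, hf0,
    integral_const, smul_eq_mul, mul_zero, zero_add] at this

theorem EuclideanSpace.volume_setOf_forall_mem_Ioo {ι : Type*} [Fintype ι] (l L : ι → ℝ) :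
    volume {x : EuclideanSpace ℝ ι | ∀ i, x i ∈ Ioo (l i) (L i)} =
      ∏ i, ENNReal.ofReal (L i - l i) := by
  have hpre : {x : EuclideanSpace ℝ ι | ∀ i, x i ∈ Ioo (l i) (L i)} =
      WithLp.ofLp ⁻¹' pi univ fun i => Ioo (l i) (L i) := by
    ext x; simp
  rw [hpre, (PiLp.volume_preserving_ofLp ι).measure_preimage
    (MeasurableSet.univ_pi fun _ => measurableSet_Ioo).nullMeasurableSet, Real.volume_pi_Ioo]

theorem cell_problem_energy_bound_general
    {n : ℕ} (p : ℝ) (hp : 1 < p)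
    (c₁ c₂ α β : ℝ) (hc₁ : 0 < c₁) (hc₂ : 0 < c₂)
    (hα0 : 0 ≤ α) (hβ : max p 2 ≤ β)
    (l L : Fin n → ℝ)
    (Z : Set (EuclideanSpace ℝ (Fin n)))
    (hZ : Z = {x : EuclideanSpace ℝ (Fin n) | ∀ i, x i ∈ Set.Ioo (l i) (L i)}) :
    ∃ c : ℝ, 0 < c ∧
      ∀ (y : EuclideanSpace ℝ (Fin n))
        (a : EuclideanSpace ℝ (Fin n) → EuclideanSpace ℝ (Fin n) →
          EuclideanSpace ℝ (Fin n) → EuclideanSpace ℝ (Fin n)),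
        (∀ᵐ z : EuclideanSpace ℝ (Fin n) ∂volume, a y z 0 = 0) →
        (∀ᵐ z : EuclideanSpace ℝ (Fin n) ∂volume,
          ∀ ξ₁ ξ₂ : EuclideanSpace ℝ (Fin n),
            ‖a y z ξ₁ - a y z ξ₂‖ ≤
              c₁ * (1 + ‖ξ₁‖ + ‖ξ₂‖) ^ (p - 1 - α) * ‖ξ₁ - ξ₂‖ ^ α) →
        (∀ᵐ z : EuclideanSpace ℝ (Fin n) ∂volume,
          ∀ ξ₁ ξ₂ : EuclideanSpace ℝ (Fin n),
            ⟪a y z ξ₁ - a y z ξ₂, ξ₁ - ξ₂⟫ ≥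
              c₂ * (1 + ‖ξ₁‖ + ‖ξ₂‖) ^ (p - β) * ‖ξ₁ - ξ₂‖ ^ β) →
        ∀ (τ : EuclideanSpace ℝ (Fin n))
          (V : EuclideanSpace ℝ (Fin n) → EuclideanSpace ℝ (Fin n)),
          MemLp V (ENNReal.ofReal p) (volume.restrict Z) →
          AEStronglyMeasurable (fun z => a y z (τ + V z)) (volume.restrict Z) →
          Integrable (fun z => ⟪a y z (τ + V z), V z⟫) (volume.restrict Z) →
          (∫ z in Z, ⟪a y z (τ + V z), V z⟫) = 0 →
          (∫ z in Z, ‖τ + V z‖ ^ p) ≤ c * (1 + ‖τ‖ ^ p) := by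
  obtain ⟨κ, C, hκ, hC, hpointwise⟩ := exists_rpow_norm_add_le_inner_add
    (E := EuclideanSpace ℝ (Fin n)) hp hc₁.le hc₂ hα0 (le_of_max_le_left hβ)
  have hZ_fin : volume Z ≠ ⊤ := by
    rw [hZ, EuclideanSpace.volume_setOf_forall_mem_Ioo]
    exact ENNReal.prod_ne_top fun _ _ => ENNReal.ofReal_ne_top
  have : Fact (volume Z < ⊤) := ⟨hZ_fin.lt_top⟩
  refine ⟨(volume Z).toReal * C + 1, by positivity, ?_⟩
  intro y a h0 hgrow hmon τ V hV _ horth_int horth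
  have hW : Integrable (fun z => ‖τ + V z‖ ^ p) (volume.restrict Z) := by
    simpa [ENNReal.toReal_ofReal (zero_lt_one.trans hp).le] using
      ((memLp_const τ).add hV).integrable_norm_rpow (by simp; linarith) ENNReal.ofReal_ne_top
  have hbound := integral_le_measureReal_mul_of_ae_le_mul_add horth_int hW horth
    (b := C * (1 + ‖τ‖ ^ p)) (by
      filter_upwards [ae_restrict_of_ae h0, ae_restrict_of_ae hgrow, ae_restrict_of_ae hmon]
        with z hz0 hzgrow hzmon
      exact hpointwise (a y z) hz0 hzgrow hzmon τ (V z))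
  rw [measureReal_restrict_apply_univ] at hbound
  calc (∫ z in Z, ‖τ + V z‖ ^ p) ≤ (volume Z).toReal * (C * (1 + ‖τ‖ ^ p)) := hbound
    _ ≤ ((volume Z).toReal * C + 1) * (1 + ‖τ‖ ^ p) := by
      rw [← mul_assoc]; gcongr; linarith

/-- Energy bound for the cell problem: if `a(y,·,·)` satisfies the
structure conditions and `V ∈ L^p(Z;ℝⁿ)` satisfies `∫_Z (a(y,z,τ+V), V) dz = 0`, then
`∫_Z |τ + V|^p dz ≤ c (1 + |τ|^p)` with `c` depending only on `c₁, c₂, p, α, β, |Z|`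
(in particular independent of `τ` and `y`). -/
theorem cell_problem_energy_bound
    {n : ℕ} (p : ℝ) (hp : 1 < p)
    (c₁ c₂ α β : ℝ) (hc₁ : 0 < c₁) (hc₂ : 0 < c₂)
    (hα0 : 0 ≤ α) (hα : α ≤ min 1 (p - 1)) (hβ : max p 2 ≤ β)
    (l L : Fin n → ℝ) (hlL : ∀ i, l i < L i)
    (Z : Set (EuclideanSpace ℝ (Fin n)))
    (hZ : Z = {x : EuclideanSpace ℝ (Fin n) | ∀ i, x i ∈ Set.Ioo (l i) (L i)}) :
    ∃ c : ℝ, 0 < c ∧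
      ∀ (y : EuclideanSpace ℝ (Fin n))
        (a : EuclideanSpace ℝ (Fin n) → EuclideanSpace ℝ (Fin n) →
          EuclideanSpace ℝ (Fin n) → EuclideanSpace ℝ (Fin n)),
        (∀ᵐ z : EuclideanSpace ℝ (Fin n) ∂volume, a y z 0 = 0) →
        (∀ᵐ z : EuclideanSpace ℝ (Fin n) ∂volume,
          ∀ ξ₁ ξ₂ : EuclideanSpace ℝ (Fin n),
            ‖a y z ξ₁ - a y z ξ₂‖ ≤
              c₁ * (1 + ‖ξ₁‖ + ‖ξ₂‖) ^ (p - 1 - α) * ‖ξ₁ - ξ₂‖ ^ α) →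
        (∀ᵐ z : EuclideanSpace ℝ (Fin n) ∂volume,
          ∀ ξ₁ ξ₂ : EuclideanSpace ℝ (Fin n),
            ⟪a y z ξ₁ - a y z ξ₂, ξ₁ - ξ₂⟫ ≥
              c₂ * (1 + ‖ξ₁‖ + ‖ξ₂‖) ^ (p - β) * ‖ξ₁ - ξ₂‖ ^ β) →
        ∀ (τ : EuclideanSpace ℝ (Fin n))
          (V : EuclideanSpace ℝ (Fin n) → EuclideanSpace ℝ (Fin n)),
          MemLp V (ENNReal.ofReal p) (volume.restrict Z) →
          AEStronglyMeasurable (fun z => a y z (τ + V z)) (volume.restrict Z) →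
          Integrable (fun z => ⟪a y z (τ + V z), V z⟫) (volume.restrict Z) →
          (∫ z in Z, ⟪a y z (τ + V z), V z⟫) = 0 →
          (∫ z in Z, ‖τ + V z‖ ^ p) ≤ c * (1 + ‖τ‖ ^ p) :=
  cell_problem_energy_bound_general p hp c₁ c₂ α β hc₁ hc₂ hα0 hβ l L Z hZ
end

section
/- Fix 1 < p < ∞ and q = p/(p−1), let Z ⊂ ℝ^n be a bounded open rectangle. Let a : ℝ^n × ℝ^n × ℝ^n → ℝ^n satisfy, for a.e. z ∈ ℝ^n, all y, y_1, y_2 ∈ ℝ^n and all ξ, ξ_1, ξ_2 ∈ ℝ^n: a(y,z,0) = 0; |a(y,z,ξ_1) − a(y,z,ξ_2)| ≤ c_1 (1 + |ξ_1| + |ξ_2|)^{p−1−α} |ξ_1 − ξ_2|^α; (a(y,z,ξ_1) − a(y,z,ξ_2), ξ_1 − ξ_2) ≥ c_2 (1 + |ξ_1| + |ξ_2|)^{p−β} |ξ_1 − ξ_2|^β; and |a(y_1,z,ξ) − a(y_2,z,ξ)|^q ≤ ω(|y_1 − y_2|)(1 + |ξ|^p), where c_1, c_2 > 0, 0 < α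 ≤ min{1, p−1}, max{p, 2} ≤ β < ∞, and ω : ℝ → ℝ is continuous, increasing with ω(0) = 0. Let τ, y_1, y_2 ∈ ℝ^n and let V_1, V_2 ∈ L^p(Z; ℝ^n) satisfy the energy bounds ∫_Z |τ + V_i|^p dz ≤ c(1 + |τ|^p) for i = 1, 2 and the orthogonality relations ∫_Z (a(y_1, z, τ + V_1(z)), V_1(z) − V_2(z)) dz = 0 and ∫_Z (a(y_2, z, τ + V_2(z)), V_1(z) − V_2(z)) dz = 0. Then there exists a continuous increasing function ω̃ : ℝ → ℝ with ω̃(0) = 0, depending only on ω, c, c_1, c_2, p, α, β and |Z|, such that (∫_Z |V_1(z) − V_2(z)|^p dz)^{α/(p−1)} ≤ ω̃(|y_1 − y_2|)(1 + |τ|^p)^{α/(p−1)}. -/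
/-!
Write `W = V₁ - V₂` and `s = 1 + |τ + V₁| + |τ + V₂|`. Strong monotonicity of `a(y₂, z, ·)`,
tested against `W`, together with the two orthogonality relations and Hölder's inequality gives
`c₂ ∫ s^(p-β) |W|^β ≤ ∫ (a(y₂, τ + V₁) - a(y₁, τ + V₁), W) ≤ ‖d‖_q ‖W‖_p`, where
`d = a(y₁, τ + V₁) - a(y₂, τ + V₁)`; the modulus of continuity in `y` puts `d` in `L^q` with
`‖d‖_q^q ≤ ω(|y₁ - y₂|) ∫ (1 + |τ + V₁|^p)`.
Hölder with the exponents `β/(β-p)` and `β/p` gives the reverse bound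
`∫ |W|^p ≤ (∫ s^p)^(1 - p/β) (∫ s^(p-β) |W|^β)^(p/β)`. Eliminating the weighted integral,
`c₂^p (∫ |W|^p)^(β-1) ≤ (∫ s^p)^(β-p) (ω(|y₁ - y₂|) ∫ (1 + |τ + V₁|^p))^(p-1)`, and the energy
bounds make the right side `C ω(|y₁ - y₂|)^(p-1) (1 + |τ|^p)^(β-1)`. Raising to the power
`α/((β-1)(p-1))` gives the claim with `ω̃(t) = C' ω(t)^(α/(β-1))`.
-/

open MeasureTheory Set
open scoped RealInnerProductSpace

theorem Real.one_add_add_rpow_le {p a b : ℝ} (hp : 1 ≤ p) (ha : 0 ≤ a) (hb : 0 ≤ b) :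
    (1 + a + b) ^ p ≤ 3 ^ (p - 1) * (1 + a ^ p + b ^ p) := by
  have := Real.rpow_sum_le_const_mul_sum_rpow_of_nonneg (s := Finset.univ) (f := ![1, a, b]) hp
    (by intro i _; fin_cases i <;> simp [ha, hb])
  simpa [Fin.sum_univ_three, add_assoc] using this

theorem Real.mul_rpow_sub_one_le_of_interpolation {M P J D c p q β : ℝ}
    (hpq : p.HolderConjugate q) (hpβ : p ≤ β) (hc : 0 < c) (hM : 0 ≤ M) (hP : 0 ≤ P)
    (hJ : 0 ≤ J) (hD : 0 ≤ D) (hrev : M ≤ P ^ (1 - p / β) * J ^ (p / β))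
    (hmon : c * J ≤ D ^ (1 / q) * M ^ (1 / p)) :
    c ^ p * M ^ (β - 1) ≤ P ^ (β - p) * D ^ (p - 1) := by
  have hp : 0 < p := hpq.pos
  have hβ : 0 < β := hp.trans_le hpβ
  rcases hM.eq_or_lt with rfl | hM
  · rw [Real.zero_rpow (by linarith [hpq.lt]), mul_zero]; positivity
  have hMβ : M ^ β ≤ P ^ (β - p) * J ^ p :=
    calc M ^ β ≤ (P ^ (1 - p / β) * J ^ (p / β)) ^ β := Real.rpow_le_rpow hM.le hrev hβ.le
      _ = P ^ (β - p) * J ^ p := by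
        rw [Real.mul_rpow (by positivity) (by positivity), ← Real.rpow_mul hP,
          ← Real.rpow_mul hJ]
        congr 2 <;> field_simp
  have hJp : (c * J) ^ p ≤ D ^ (p - 1) * M :=
    calc (c * J) ^ p ≤ (D ^ (1 / q) * M ^ (1 / p)) ^ p :=
          Real.rpow_le_rpow (by positivity) hmon hp.le
      _ = D ^ (p - 1) * M := by
        rw [Real.mul_rpow (by positivity) (by positivity), ← Real.rpow_mul hD,
          ← Real.rpow_mul hM.le, one_div_mul_eq_div, hpq.div_conj_eq_sub_one,
          one_div_mul_cancel hp.ne', Real.rpow_one]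
  refine le_of_mul_le_mul_right ?_ hM
  calc c ^ p * M ^ (β - 1) * M = c ^ p * M ^ β := by
        rw [mul_assoc, ← Real.rpow_add_one hM.ne', sub_add_cancel]
    _ ≤ c ^ p * (P ^ (β - p) * J ^ p) := by gcongr
    _ = P ^ (β - p) * (c * J) ^ p := by rw [Real.mul_rpow hc.le hJ]; ring
    _ ≤ P ^ (β - p) * (D ^ (p - 1) * M) := by gcongr
    _ = P ^ (β - p) * D ^ (p - 1) * M := by ring

theorem Real.rpow_div_sub_one_le_of_mul_rpow_le {M T Ω A B c p β α : ℝ} (hp : 1 < p)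
    (hpβ : p ≤ β) (hα : 0 ≤ α) (hc : 0 < c) (hM : 0 ≤ M) (hT : 0 < T) (hΩ : 0 ≤ Ω)
    (hA : 0 ≤ A) (hB : 0 ≤ B)
    (h : c ^ p * M ^ (β - 1) ≤ (A * T) ^ (β - p) * (Ω * (B * T)) ^ (p - 1)) :
    M ^ (α / (p - 1)) ≤
      (A ^ (β - p) * B ^ (p - 1) / c ^ p) ^ (α / ((β - 1) * (p - 1))) * Ω ^ (α / (β - 1)) *
        T ^ (α / (p - 1)) := by
  have hp1 : 0 < p - 1 := sub_pos.2 hp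
  have hβ1 : 0 < β - 1 := by linarith
  set C := A ^ (β - p) * B ^ (p - 1) / c ^ p
  have hC : 0 ≤ C := by positivity
  have h' : M ^ (β - 1) ≤ C * Ω ^ (p - 1) * T ^ (β - 1) := by
    refine le_of_mul_le_mul_left (h.trans_eq ?_) (by positivity : 0 < c ^ p)
    rw [Real.mul_rpow hA hT.le, Real.mul_rpow hΩ (by positivity), Real.mul_rpow hB hT.le]
    simp only [C]
    field_simp
    rw [show β - 1 = (β - p) + (p - 1) by ring, Real.rpow_add hT]
    ring
  have e := Real.rpow_le_rpow (by positivity) h' (by positivity : 0 ≤ α / ((β - 1) * (p - 1)))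
  rw [Real.mul_rpow (by positivity) (by positivity), Real.mul_rpow hC (by positivity),
    ← Real.rpow_mul hM, ← Real.rpow_mul hΩ, ← Real.rpow_mul hT.le] at e
  convert e using 3 <;> field_simp

theorem continuous_monotone_const_mul_max_rpow {ω : ℝ → ℝ} (hcont : Continuous ω)
    (hmono : Monotone ω) (hω₀ : ω 0 = 0) {C γ : ℝ} (hC : 0 ≤ C) (hγ : 0 < γ) :
    Continuous (fun t => C * max (ω t) 0 ^ γ) ∧ Monotone (fun t => C * max (ω t) 0 ^ γ) ∧
      C * max (ω 0) 0 ^ γ = 0 := by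
  refine ⟨continuous_const.mul ((hcont.max continuous_const).rpow_const fun _ => Or.inr hγ.le),
    fun s t hst => ?_, by rw [hω₀, max_self, Real.zero_rpow hγ.ne', mul_zero]⟩
  dsimp only
  gcongr
  exact hmono hst

theorem EuclideanSpace.volume_setOf_forall_mem_Ioo_lt_top {n : ℕ} (l L : Fin n → ℝ) :
    volume {x : EuclideanSpace ℝ (Fin n) | ∀ i, x i ∈ Ioo (l i) (L i)} < ⊤ := by
  have hpre : {x : EuclideanSpace ℝ (Fin n) | ∀ i, x i ∈ Ioo (l i) (L i)} =
      WithLp.ofLp ⁻¹' Set.pi univ fun i => Ioo (l i) (L i) := by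
    ext x; simp
  rw [hpre, (PiLp.volume_preserving_ofLp (Fin n)).measure_preimage
    (MeasurableSet.univ_pi fun _ => measurableSet_Ioo).nullMeasurableSet, Real.volume_pi_Ioo]
  exact ENNReal.prod_lt_top fun _ _ => ENNReal.ofReal_lt_top

section

variable {X F : Type*} [MeasurableSpace X] {μ : Measure X} [NormedAddCommGroup F]

theorem memLp_of_norm_rpow_le {f : X → F} {g : X → ℝ} {r : ℝ}
    (hr : 0 < r) (hf : AEStronglyMeasurable f μ) (hg : Integrable g μ)
    (hfg : ∀ᵐ x ∂μ, ‖f x‖ ^ r ≤ g x) : MemLp f (ENNReal.ofReal r) μ := by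
  rw [← integrable_norm_rpow_iff hf (by simpa using hr) ENNReal.ofReal_ne_top,
    ENNReal.toReal_ofReal hr.le]
  refine hg.mono' (hf.norm.aemeasurable.pow_const r).aestronglyMeasurable ?_
  filter_upwards [hfg] with x hx
  rwa [Real.norm_of_nonneg (by positivity)]

theorem MeasureTheory.MemLp.integrable_norm_rpow_ofReal {f : X → F} {p : ℝ}
    (hp : 0 < p) (hf : MemLp f (ENNReal.ofReal p) μ) : Integrable (fun x => ‖f x‖ ^ p) μ := by
  simpa [ENNReal.toReal_ofReal hp.le] using
    hf.integrable_norm_rpow (by simpa using hp) ENNReal.ofReal_ne_top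

theorem integral_rpow_mul_rpow_le {u v : X → ℝ} {θ : ℝ} (hθ₀ : 0 ≤ θ) (hθ₁ : θ < 1)
    (hu₀ : 0 ≤ᵐ[μ] u) (hv₀ : 0 ≤ᵐ[μ] v) (hu : Integrable u μ) (hv : Integrable v μ) :
    ∫ x, u x ^ θ * v x ^ (1 - θ) ∂μ ≤ (∫ x, u x ∂μ) ^ θ * (∫ x, v x ∂μ) ^ (1 - θ) := by
  rcases hθ₀.eq_or_lt with rfl | hθ
  · simp
  have hpq : θ⁻¹.HolderConjugate (1 - θ)⁻¹ := (Real.HolderConjugate.one_sub_inv_inv hθ hθ₁).symm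
  have hmem {w : X → ℝ} {η : ℝ} (hη : 0 < η) (hw₀ : 0 ≤ᵐ[μ] w) (hw : Integrable w μ) :
      MemLp (fun x => w x ^ η) (ENNReal.ofReal η⁻¹) μ := by
    refine memLp_of_norm_rpow_le (inv_pos.2 hη)
      (hw.aemeasurable.pow_const η).aestronglyMeasurable hw ?_
    filter_upwards [hw₀] with x hx
    rw [Real.norm_of_nonneg (Real.rpow_nonneg hx _), ← Real.rpow_mul hx, mul_inv_cancel₀ hη.ne',
      Real.rpow_one]
  have hη {w : X → ℝ} {η : ℝ} (hη : 0 < η) (hw₀ : 0 ≤ᵐ[μ] w) :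
      ∫ x, (w x ^ η) ^ η⁻¹ ∂μ = ∫ x, w x ∂μ := by
    refine integral_congr_ae ?_
    filter_upwards [hw₀] with x hx
    rw [← Real.rpow_mul hx, mul_inv_cancel₀ hη.ne', Real.rpow_one]
  have := integral_mul_le_Lp_mul_Lq_of_nonneg hpq
    (hu₀.mono fun _ hx => Real.rpow_nonneg hx _) (hv₀.mono fun _ hx => Real.rpow_nonneg hx _)
    (hmem hθ hu₀ hu) (hmem (sub_pos.2 hθ₁) hv₀ hv)
  rwa [hη hθ hu₀, hη (sub_pos.2 hθ₁) hv₀, one_div, one_div, inv_inv, inv_inv] at this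

theorem integral_rpow_le_of_weight {g s : X → ℝ} {p β : ℝ} (hp : 0 < p) (hpβ : p ≤ β)
    (hg : 0 ≤ᵐ[μ] g) (hs : ∀ᵐ x ∂μ, 0 < s x) (hsp : Integrable (fun x => s x ^ p) μ)
    (hJ : Integrable (fun x => s x ^ (p - β) * g x ^ β) μ) :
    ∫ x, g x ^ p ∂μ ≤
      (∫ x, s x ^ p ∂μ) ^ (1 - p / β) * (∫ x, s x ^ (p - β) * g x ^ β ∂μ) ^ (p / β) := by
  have hβ : 0 < β := hp.trans_le hpβ
  have key := integral_rpow_mul_rpow_le (sub_nonneg.2 ((div_le_one hβ).2 hpβ))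
    (sub_lt_self 1 (div_pos hp hβ)) (hs.mono fun x hx => Real.rpow_nonneg hx.le p)
    (by filter_upwards [hg, hs] with x hgx hsx
        exact mul_nonneg (Real.rpow_nonneg hsx.le _) (Real.rpow_nonneg hgx _)) hsp hJ
  rw [sub_sub_cancel] at key
  refine le_of_eq_of_le (integral_congr_ae ?_) key
  filter_upwards [hg, hs] with x hgx hsx
  rw [Real.mul_rpow (Real.rpow_nonneg hsx.le _) (Real.rpow_nonneg hgx _), ← Real.rpow_mul hsx.le,
    ← Real.rpow_mul hsx.le, ← Real.rpow_mul hgx, ← mul_assoc, ← Real.rpow_add hsx,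
    show p * (1 - p / β) + (p - β) * (p / β) = 0 by field_simp; ring, Real.rpow_zero, one_mul,
    mul_div_cancel₀ p hβ.ne']

theorem integral_one_add_rpow_le [IsFiniteMeasure μ] {f : X → F} {p c T : ℝ}
    (hf : Integrable (fun x => ‖f x‖ ^ p) μ) (hE : ∫ x, ‖f x‖ ^ p ∂μ ≤ c * T) (hT : 1 ≤ T) :
    ∫ x, (1 + ‖f x‖ ^ p) ∂μ ≤ (μ.real univ + c) * T := by
  rw [integral_add (integrable_const 1) hf, integral_const, smul_eq_mul, mul_one]
  nlinarith [measureReal_nonneg (μ := μ) (s := univ)]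

theorem integral_one_add_add_rpow_le [IsFiniteMeasure μ] {f₁ f₂ : X → F} {p c T : ℝ}
    (hp : 1 ≤ p) (hf₁ : Integrable (fun x => ‖f₁ x‖ ^ p) μ)
    (hf₂ : Integrable (fun x => ‖f₂ x‖ ^ p) μ) (hE₁ : ∫ x, ‖f₁ x‖ ^ p ∂μ ≤ c * T)
    (hE₂ : ∫ x, ‖f₂ x‖ ^ p ∂μ ≤ c * T) (hT : 1 ≤ T) :
    ∫ x, (1 + ‖f₁ x‖ + ‖f₂ x‖) ^ p ∂μ ≤ 3 ^ (p - 1) * (μ.real univ + 2 * c) * T := by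
  have hsum : Integrable (fun x => 1 + ‖f₁ x‖ ^ p + ‖f₂ x‖ ^ p) μ :=
    ((integrable_const 1).add hf₁).add hf₂
  calc ∫ x, (1 + ‖f₁ x‖ + ‖f₂ x‖) ^ p ∂μ
      ≤ ∫ x, 3 ^ (p - 1) * (1 + ‖f₁ x‖ ^ p + ‖f₂ x‖ ^ p) ∂μ :=
        integral_mono_of_nonneg (ae_of_all _ fun x => by positivity) (hsum.const_mul _)
          (ae_of_all _ fun x => Real.one_add_add_rpow_le hp (norm_nonneg _) (norm_nonneg _))
    _ = 3 ^ (p - 1) * (μ.real univ + ∫ x, ‖f₁ x‖ ^ p ∂μ + ∫ x, ‖f₂ x‖ ^ p ∂μ) := by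
        rw [integral_const_mul,
          integral_add (f := fun x => 1 + ‖f₁ x‖ ^ p) ((integrable_const 1).add hf₁) hf₂,
          integral_add (integrable_const 1) hf₁, integral_const, smul_eq_mul, mul_one]
    _ ≤ 3 ^ (p - 1) * (μ.real univ + 2 * c) * T := by
        rw [mul_assoc]
        gcongr
        nlinarith [measureReal_nonneg (μ := μ) (s := univ)]

variable {E : Type*} [NormedAddCommGroup E] [InnerProductSpace ℝ E]

theorem integrable_inner_of_memLp {p q : ℝ} (hpq : p.HolderConjugate q) {F W : X → E}
    (hF : MemLp F (ENNReal.ofReal q) μ) (hW : MemLp W (ENNReal.ofReal p) μ) :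
    Integrable (fun x => ⟪F x, W x⟫) μ := by
  have := hpq.symm.ennrealOfReal
  refine (hF.norm.integrable_mul hW.norm).mono (hF.1.inner hW.1) (ae_of_all _ fun x => ?_)
  simpa using norm_inner_le_norm (𝕜 := ℝ) (F x) (W x)

theorem integrable_inner_sub_and_integral_eq {F G₁ G₂ W : X → E}
    (hF : Integrable (fun x => ⟪F x, W x⟫) μ) (hG₂ : Integrable (fun x => ⟪G₂ x, W x⟫) μ)
    (hG₁ : Integrable (fun x => ⟪G₁ x - F x, W x⟫) μ)
    (hF₀ : ∫ x, ⟪F x, W x⟫ ∂μ = 0) (hG₂₀ : ∫ x, ⟪G₂ x, W x⟫ ∂μ = 0) :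
    Integrable (fun x => ⟪G₁ x - G₂ x, W x⟫) μ ∧
      ∫ x, ⟪G₁ x - G₂ x, W x⟫ ∂μ = ∫ x, ⟪G₁ x - F x, W x⟫ ∂μ := by
  have hsplit : (fun x => ⟪G₁ x - G₂ x, W x⟫) =
      fun x => ⟪G₁ x - F x, W x⟫ + ⟪F x, W x⟫ - ⟪G₂ x, W x⟫ := by
    ext x; simp only [inner_sub_left]; ring
  rw [hsplit]
  refine ⟨(hG₁.add hF).sub hG₂, ?_⟩
  rw [integral_sub (f := fun x => ⟪G₁ x - F x, W x⟫ + ⟪F x, W x⟫) (hG₁.add hF) hG₂,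
    integral_add hG₁ hF, hF₀, hG₂₀, add_zero, sub_zero]

variable {p q β c₂ Ω : ℝ} {a₁ a₂ : X → E → E} {τ : E} {V₁ V₂ : X → E}

theorem integrable_weight_and_mul_integral_le_of_orthogonal {F : X → E} (hc₂ : 0 < c₂)
    (hmono : ∀ᵐ x ∂μ, ∀ ξ₁ ξ₂ : E,
      c₂ * (1 + ‖ξ₁‖ + ‖ξ₂‖) ^ (p - β) * ‖ξ₁ - ξ₂‖ ^ β ≤ ⟪a₂ x ξ₁ - a₂ x ξ₂, ξ₁ - ξ₂⟫)
    (hV₁ : AEStronglyMeasurable V₁ μ) (hV₂ : AEStronglyMeasurable V₂ μ)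
    (hF : Integrable (fun x => ⟪F x, V₁ x - V₂ x⟫) μ)
    (hint₂ : Integrable (fun x => ⟪a₂ x (τ + V₂ x), V₁ x - V₂ x⟫) μ)
    (hdiff : Integrable (fun x => ⟪a₂ x (τ + V₁ x) - F x, V₁ x - V₂ x⟫) μ)
    (horth₁ : ∫ x, ⟪F x, V₁ x - V₂ x⟫ ∂μ = 0)
    (horth₂ : ∫ x, ⟪a₂ x (τ + V₂ x), V₁ x - V₂ x⟫ ∂μ = 0) :
    Integrable (fun x => (1 + ‖τ + V₁ x‖ + ‖τ + V₂ x‖) ^ (p - β) * ‖V₁ x - V₂ x‖ ^ β) μ ∧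
      c₂ * ∫ x, (1 + ‖τ + V₁ x‖ + ‖τ + V₂ x‖) ^ (p - β) * ‖V₁ x - V₂ x‖ ^ β ∂μ ≤
        ∫ x, ⟪a₂ x (τ + V₁ x) - F x, V₁ x - V₂ x⟫ ∂μ := by
  obtain ⟨hinner_int, hinner_eq⟩ :=
    integrable_inner_sub_and_integral_eq hF hint₂ hdiff horth₁ horth₂
  have hpoint : ∀ᵐ x ∂μ, c₂ * ((1 + ‖τ + V₁ x‖ + ‖τ + V₂ x‖) ^ (p - β) * ‖V₁ x - V₂ x‖ ^ β) ≤
      ⟪a₂ x (τ + V₁ x) - a₂ x (τ + V₂ x), V₁ x - V₂ x⟫ := by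
    filter_upwards [hmono] with x hx
    simpa only [mul_assoc, add_sub_add_left_eq_sub] using hx (τ + V₁ x) (τ + V₂ x)
  have hmeas : AEStronglyMeasurable
      (fun x => (1 + ‖τ + V₁ x‖ + ‖τ + V₂ x‖) ^ (p - β) * ‖V₁ x - V₂ x‖ ^ β) μ :=
    ((((aestronglyMeasurable_const.add (aestronglyMeasurable_const.add hV₁).norm).add
      (aestronglyMeasurable_const.add hV₂).norm).aemeasurable.pow_const _).mul
        ((hV₁.sub hV₂).norm.aemeasurable.pow_const _)).aestronglyMeasurable
  have hint : Integrable
      (fun x => (1 + ‖τ + V₁ x‖ + ‖τ + V₂ x‖) ^ (p - β) * ‖V₁ x - V₂ x‖ ^ β) μ := by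
    refine (hinner_int.div_const c₂).mono' hmeas ?_
    filter_upwards [hpoint] with x hx
    rwa [Real.norm_of_nonneg (by positivity), le_div_iff₀' hc₂]
  refine ⟨hint, ?_⟩
  rw [← integral_const_mul, ← hinner_eq]
  exact integral_mono_ae (hint.const_mul c₂) hinner_int hpoint

theorem cell_solutions_difference_estimate [IsFiniteMeasure μ] (hpq : p.HolderConjugate q)
    (hpβ : p ≤ β) (hc₂ : 0 < c₂)
    (hmono : ∀ᵐ x ∂μ, ∀ ξ₁ ξ₂ : E,
      c₂ * (1 + ‖ξ₁‖ + ‖ξ₂‖) ^ (p - β) * ‖ξ₁ - ξ₂‖ ^ β ≤ ⟪a₂ x ξ₁ - a₂ x ξ₂, ξ₁ - ξ₂⟫)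
    (hmod : ∀ᵐ x ∂μ, ∀ ξ : E, ‖a₁ x ξ - a₂ x ξ‖ ^ q ≤ Ω * (1 + ‖ξ‖ ^ p))
    (hV₁ : MemLp V₁ (ENNReal.ofReal p) μ) (hV₂ : MemLp V₂ (ENNReal.ofReal p) μ)
    (ha₁ : AEStronglyMeasurable (fun x => a₁ x (τ + V₁ x)) μ)
    (ha₂ : AEStronglyMeasurable (fun x => a₂ x (τ + V₁ x)) μ)
    (hint₁ : Integrable (fun x => ⟪a₁ x (τ + V₁ x), V₁ x - V₂ x⟫) μ)
    (hint₂ : Integrable (fun x => ⟪a₂ x (τ + V₂ x), V₁ x - V₂ x⟫) μ)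
    (horth₁ : ∫ x, ⟪a₁ x (τ + V₁ x), V₁ x - V₂ x⟫ ∂μ = 0)
    (horth₂ : ∫ x, ⟪a₂ x (τ + V₂ x), V₁ x - V₂ x⟫ ∂μ = 0) :
    c₂ ^ p * (∫ x, ‖V₁ x - V₂ x‖ ^ p ∂μ) ^ (β - 1) ≤
      (∫ x, (1 + ‖τ + V₁ x‖ + ‖τ + V₂ x‖) ^ p ∂μ) ^ (β - p) *
        (Ω * ∫ x, (1 + ‖τ + V₁ x‖ ^ p) ∂μ) ^ (p - 1) := by
  have hp : 0 < p := hpq.pos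
  set W := fun x => V₁ x - V₂ x
  set s := fun x => 1 + ‖τ + V₁ x‖ + ‖τ + V₂ x‖
  set d := fun x => a₂ x (τ + V₁ x) - a₁ x (τ + V₁ x) with hd_def
  have hf₁ : MemLp (fun x => τ + V₁ x) (ENNReal.ofReal p) μ := (memLp_const τ).add hV₁
  have hW : MemLp W (ENNReal.ofReal p) μ := hV₁.sub hV₂
  have hs : MemLp s (ENNReal.ofReal p) μ :=
    ((memLp_const (1 : ℝ)).add hf₁.norm).add ((memLp_const τ).add hV₂).norm
  have hf₁p : Integrable (fun x => 1 + ‖τ + V₁ x‖ ^ p) μ :=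
    (integrable_const 1).add (hf₁.integrable_norm_rpow_ofReal hp)
  have hd_pt : ∀ᵐ x ∂μ, ‖d x‖ ^ q ≤ Ω * (1 + ‖τ + V₁ x‖ ^ p) := by
    filter_upwards [hmod] with x hx
    rw [hd_def, norm_sub_rev]; exact hx _
  have hd : MemLp d (ENNReal.ofReal q) μ :=
    memLp_of_norm_rpow_le hpq.symm.pos (ha₂.sub ha₁) (hf₁p.const_mul Ω) hd_pt
  have hdW := integrable_inner_of_memLp hpq hd hW
  have hdW_norm : Integrable (fun x => ‖d x‖ * ‖W x‖) μ := by
    have := hpq.symm.ennrealOfReal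
    exact hd.norm.integrable_mul hW.norm
  obtain ⟨hJ, hmonoJ⟩ := integrable_weight_and_mul_integral_le_of_orthogonal hc₂ hmono hV₁.1
    hV₂.1 hint₁ hint₂ hdW horth₁ horth₂
  have hJ_le : c₂ * ∫ x, s x ^ (p - β) * ‖W x‖ ^ β ∂μ ≤
      (∫ x, ‖d x‖ ^ q ∂μ) ^ (1 / q) * (∫ x, ‖W x‖ ^ p ∂μ) ^ (1 / p) :=
    calc c₂ * ∫ x, s x ^ (p - β) * ‖W x‖ ^ β ∂μ ≤ ∫ x, ⟪d x, W x⟫ ∂μ := hmonoJ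
      _ ≤ ∫ x, ‖d x‖ * ‖W x‖ ∂μ := integral_mono hdW hdW_norm fun x => real_inner_le_norm _ _
      _ ≤ _ := integral_mul_norm_le_Lp_mul_Lq hpq.symm hd hW
  have hrev := integral_rpow_le_of_weight hp hpβ (ae_of_all _ fun x => norm_nonneg (W x))
    (ae_of_all _ fun x => (by positivity : 0 < s x))
    ((hs.integrable_norm_rpow_ofReal hp).congr (ae_of_all _ fun x => by
      simp only [Real.norm_of_nonneg (by positivity : 0 ≤ s x)])) hJ
  have hD : ∫ x, ‖d x‖ ^ q ∂μ ≤ Ω * ∫ x, (1 + ‖τ + V₁ x‖ ^ p) ∂μ := by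
    rw [← integral_const_mul]
    exact integral_mono_ae (hd.integrable_norm_rpow_ofReal hpq.symm.pos) (hf₁p.const_mul Ω) hd_pt
  calc c₂ ^ p * (∫ x, ‖W x‖ ^ p ∂μ) ^ (β - 1)
      ≤ (∫ x, s x ^ p ∂μ) ^ (β - p) * (∫ x, ‖d x‖ ^ q ∂μ) ^ (p - 1) :=
        Real.mul_rpow_sub_one_le_of_interpolation hpq hpβ hc₂
          (integral_nonneg fun x => by positivity) (integral_nonneg fun x => by positivity)
          (integral_nonneg fun x => by positivity) (integral_nonneg fun x => by positivity)
          hrev hJ_le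
    _ ≤ _ := by gcongr; exact hpq.sub_one_pos.le

end

theorem cell_solutions_continuity_in_slow_variable_general
    {n : ℕ} (p q : ℝ) (hp : 1 < p) (hq : q = p / (p - 1))
    (c c₁ c₂ α β : ℝ) (hc : 0 < c) (hc₂ : 0 < c₂)
    (hα0 : 0 < α) (hβ : max p 2 ≤ β)
    (ω : ℝ → ℝ) (hωcont : Continuous ω) (hωmono : Monotone ω) (hω0 : ω 0 = 0)
    (l L : Fin n → ℝ)
    (Z : Set (EuclideanSpace ℝ (Fin n)))
    (hZ : Z = {x : EuclideanSpace ℝ (Fin n) | ∀ i, x i ∈ Set.Ioo (l i) (L i)}) :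
    ∃ ω' : ℝ → ℝ, Continuous ω' ∧ Monotone ω' ∧ ω' 0 = 0 ∧
      ∀ (a : EuclideanSpace ℝ (Fin n) → EuclideanSpace ℝ (Fin n) →
          EuclideanSpace ℝ (Fin n) → EuclideanSpace ℝ (Fin n)),
        (∀ᵐ z : EuclideanSpace ℝ (Fin n) ∂volume,
          ∀ y : EuclideanSpace ℝ (Fin n), a y z 0 = 0) →
        (∀ᵐ z : EuclideanSpace ℝ (Fin n) ∂volume,
          ∀ y ξ₁ ξ₂ : EuclideanSpace ℝ (Fin n),
            ‖a y z ξ₁ - a y z ξ₂‖ ≤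
              c₁ * (1 + ‖ξ₁‖ + ‖ξ₂‖) ^ (p - 1 - α) * ‖ξ₁ - ξ₂‖ ^ α) →
        (∀ᵐ z : EuclideanSpace ℝ (Fin n) ∂volume,
          ∀ y ξ₁ ξ₂ : EuclideanSpace ℝ (Fin n),
            ⟪a y z ξ₁ - a y z ξ₂, ξ₁ - ξ₂⟫ ≥
              c₂ * (1 + ‖ξ₁‖ + ‖ξ₂‖) ^ (p - β) * ‖ξ₁ - ξ₂‖ ^ β) →
        (∀ᵐ z : EuclideanSpace ℝ (Fin n) ∂volume,
          ∀ y₁ y₂ ξ : EuclideanSpace ℝ (Fin n),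
            ‖a y₁ z ξ - a y₂ z ξ‖ ^ q ≤ ω ‖y₁ - y₂‖ * (1 + ‖ξ‖ ^ p)) →
        ∀ (τ y₁ y₂ : EuclideanSpace ℝ (Fin n))
          (V₁ V₂ : EuclideanSpace ℝ (Fin n) → EuclideanSpace ℝ (Fin n)),
          MemLp V₁ (ENNReal.ofReal p) (volume.restrict Z) →
          MemLp V₂ (ENNReal.ofReal p) (volume.restrict Z) →
          -- energy bounds for the two cell solutions
          (∫ z in Z, ‖τ + V₁ z‖ ^ p) ≤ c * (1 + ‖τ‖ ^ p) →
          (∫ z in Z, ‖τ + V₂ z‖ ^ p) ≤ c * (1 + ‖τ‖ ^ p) →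
          -- measurability of the composed coefficients
          AEStronglyMeasurable (fun z => a y₁ z (τ + V₁ z)) (volume.restrict Z) →
          AEStronglyMeasurable (fun z => a y₁ z (τ + V₂ z)) (volume.restrict Z) →
          AEStronglyMeasurable (fun z => a y₂ z (τ + V₁ z)) (volume.restrict Z) →
          AEStronglyMeasurable (fun z => a y₂ z (τ + V₂ z)) (volume.restrict Z) →
          -- orthogonality relations
          Integrable (fun z => ⟪a y₁ z (τ + V₁ z), V₁ z - V₂ z⟫)
            (volume.restrict Z) →
          Integrable (fun z => ⟪a y₂ z (τ + V₂ z), V₁ z - V₂ z⟫)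
            (volume.restrict Z) →
          (∫ z in Z, ⟪a y₁ z (τ + V₁ z), V₁ z - V₂ z⟫) = 0 →
          (∫ z in Z, ⟪a y₂ z (τ + V₂ z), V₁ z - V₂ z⟫) = 0 →
          (∫ z in Z, ‖V₁ z - V₂ z‖ ^ p) ^ (α / (p - 1)) ≤
            ω' ‖y₁ - y₂‖ * (1 + ‖τ‖ ^ p) ^ (α / (p - 1)) := by
  have hpq : p.HolderConjugate q := (Real.holderConjugate_iff_eq_conjExponent hp).2 hq
  have hpβ : p ≤ β := (le_max_left p 2).trans hβ
  obtain ⟨hcont, hmono, hzero⟩ := continuous_monotone_const_mul_max_rpow hωcont hωmono hω0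
    (by positivity : 0 ≤ ((3 ^ (p - 1) * (volume.real Z + 2 * c)) ^ (β - p) *
      (volume.real Z + c) ^ (p - 1) / c₂ ^ p) ^ (α / ((β - 1) * (p - 1))))
    (div_pos hα0 (by linarith : 0 < β - 1))
  refine ⟨_, hcont, hmono, hzero, ?_⟩
  intro a _ _ hamono hamod τ y₁ y₂ V₁ V₂ hV₁ hV₂ hE₁ hE₂ ha₁ _ ha₂ _ hint₁ hint₂ horth₁ horth₂
  have : IsFiniteMeasure (volume.restrict Z) :=
    isFiniteMeasure_restrict.2 (hZ ▸ (EuclideanSpace.volume_setOf_forall_mem_Ioo_lt_top l L).ne)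
  have hΩ : 0 ≤ ω ‖y₁ - y₂‖ := hω0 ▸ hωmono (norm_nonneg _)
  have hT : 1 ≤ 1 + ‖τ‖ ^ p := le_add_of_nonneg_right (by positivity)
  have hf₁ := ((memLp_const τ).add hV₁).integrable_norm_rpow_ofReal hpq.pos
  have hf₂ := ((memLp_const τ).add hV₂).integrable_norm_rpow_ofReal hpq.pos
  have key := cell_solutions_difference_estimate hpq hpβ hc₂
    ((ae_restrict_of_ae hamono).mono fun z hz => hz y₂)
    ((ae_restrict_of_ae hamod).mono fun z hz => hz y₁ y₂) hV₁ hV₂ ha₁ ha₂ hint₁ hint₂ horth₁ horth₂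
  have hP := integral_one_add_add_rpow_le hp.le hf₁ hf₂ hE₁ hE₂ hT
  have hD := integral_one_add_rpow_le hf₁ hE₁ hT
  rw [measureReal_restrict_apply_univ] at hP hD
  show _ ≤ _ * max (ω ‖y₁ - y₂‖) 0 ^ _ * _
  rw [max_eq_left hΩ]
  refine Real.rpow_div_sub_one_le_of_mul_rpow_le hp hpβ hα0.le hc₂
    (integral_nonneg fun _ => by positivity) (by positivity) hΩ (by positivity) (by positivity)
    (key.trans ?_)
  gcongr
  exacts [hP, hD]

/-- Continuity of the cell-problem solutions with respect to the slow
variable: under the structure conditions on `a` (with modulus of continuity `ω` in the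
first variable), if `V₁, V₂` satisfy the energy bounds and the orthogonality relations
of the two cell problems at `y₁, y₂`, then
`(∫_Z |V₁ − V₂|^p)^{α/(p−1)} ≤ ω̃(|y₁ − y₂|)(1 + |τ|^p)^{α/(p−1)}` for a modulus `ω̃`
depending only on `ω, c, c₁, c₂, p, α, β, |Z|`. -/
theorem cell_solutions_continuity_in_slow_variable
    {n : ℕ} (p q : ℝ) (hp : 1 < p) (hq : q = p / (p - 1))
    (c c₁ c₂ α β : ℝ) (hc : 0 < c) (hc₁ : 0 < c₁) (hc₂ : 0 < c₂)
    (hα0 : 0 < α) (hα : α ≤ min 1 (p - 1)) (hβ : max p 2 ≤ β)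
    (ω : ℝ → ℝ) (hωcont : Continuous ω) (hωmono : Monotone ω) (hω0 : ω 0 = 0)
    (l L : Fin n → ℝ) (hlL : ∀ i, l i < L i)
    (Z : Set (EuclideanSpace ℝ (Fin n)))
    (hZ : Z = {x : EuclideanSpace ℝ (Fin n) | ∀ i, x i ∈ Set.Ioo (l i) (L i)}) :
    ∃ ω' : ℝ → ℝ, Continuous ω' ∧ Monotone ω' ∧ ω' 0 = 0 ∧
      ∀ (a : EuclideanSpace ℝ (Fin n) → EuclideanSpace ℝ (Fin n) →
          EuclideanSpace ℝ (Fin n) → EuclideanSpace ℝ (Fin n)),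
        (∀ᵐ z : EuclideanSpace ℝ (Fin n) ∂volume,
          ∀ y : EuclideanSpace ℝ (Fin n), a y z 0 = 0) →
        (∀ᵐ z : EuclideanSpace ℝ (Fin n) ∂volume,
          ∀ y ξ₁ ξ₂ : EuclideanSpace ℝ (Fin n),
            ‖a y z ξ₁ - a y z ξ₂‖ ≤
              c₁ * (1 + ‖ξ₁‖ + ‖ξ₂‖) ^ (p - 1 - α) * ‖ξ₁ - ξ₂‖ ^ α) →
        (∀ᵐ z : EuclideanSpace ℝ (Fin n) ∂volume,
          ∀ y ξ₁ ξ₂ : EuclideanSpace ℝ (Fin n),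
            ⟪a y z ξ₁ - a y z ξ₂, ξ₁ - ξ₂⟫ ≥
              c₂ * (1 + ‖ξ₁‖ + ‖ξ₂‖) ^ (p - β) * ‖ξ₁ - ξ₂‖ ^ β) →
        (∀ᵐ z : EuclideanSpace ℝ (Fin n) ∂volume,
          ∀ y₁ y₂ ξ : EuclideanSpace ℝ (Fin n),
            ‖a y₁ z ξ - a y₂ z ξ‖ ^ q ≤ ω ‖y₁ - y₂‖ * (1 + ‖ξ‖ ^ p)) →
        ∀ (τ y₁ y₂ : EuclideanSpace ℝ (Fin n))
          (V₁ V₂ : EuclideanSpace ℝ (Fin n) → EuclideanSpace ℝ (Fin n)),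
          MemLp V₁ (ENNReal.ofReal p) (volume.restrict Z) →
          MemLp V₂ (ENNReal.ofReal p) (volume.restrict Z) →
          -- energy bounds for the two cell solutions
          (∫ z in Z, ‖τ + V₁ z‖ ^ p) ≤ c * (1 + ‖τ‖ ^ p) →
          (∫ z in Z, ‖τ + V₂ z‖ ^ p) ≤ c * (1 + ‖τ‖ ^ p) →
          -- measurability of the composed coefficients
          AEStronglyMeasurable (fun z => a y₁ z (τ + V₁ z)) (volume.restrict Z) →
          AEStronglyMeasurable (fun z => a y₁ z (τ + V₂ z)) (volume.restrict Z) →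
          AEStronglyMeasurable (fun z => a y₂ z (τ + V₁ z)) (volume.restrict Z) →
          AEStronglyMeasurable (fun z => a y₂ z (τ + V₂ z)) (volume.restrict Z) →
          -- orthogonality relations
          Integrable (fun z => ⟪a y₁ z (τ + V₁ z), V₁ z - V₂ z⟫)
            (volume.restrict Z) →
          Integrable (fun z => ⟪a y₂ z (τ + V₂ z), V₁ z - V₂ z⟫)
            (volume.restrict Z) →
          (∫ z in Z, ⟪a y₁ z (τ + V₁ z), V₁ z - V₂ z⟫) = 0 →
          (∫ z in Z, ⟪a y₂ z (τ + V₂ z), V₁ z - V₂ z⟫) = 0 →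
          (∫ z in Z, ‖V₁ z - V₂ z‖ ^ p) ^ (α / (p - 1)) ≤
            ω' ‖y₁ - y₂‖ * (1 + ‖τ‖ ^ p) ^ (α / (p - 1)) :=
  cell_solutions_continuity_in_slow_variable_general p q hp hq c c₁ c₂ α β hc hc₂ hα0 hβ ω hωcont
    hωmono hω0 l L Z hZ
end

section
/- Fix 1 < p < ∞, let Z ⊂ ℝ^n be a bounded open rectangle, and fix y ∈ ℝ^n. Let a : ℝ^n × ℝ^n × ℝ^n → ℝ^n satisfy, for a.e. z ∈ ℝ^n and all ξ, ξ_1, ξ_2 ∈ ℝ^n: a(y,z,0) = 0; |a(y,z,ξ_1) − a(y,z,ξ_2)| ≤ c_1 (1 + |ξ_1| + |ξ_2|)^{p−1−α} |ξ_1 − ξ_2|^α; and (a(y,z,ξ_1) − a(y,z,ξ_2), ξ_1 − ξ_2) ≥ c_2 (1 + |ξ_1| + |ξ_2|)^{p−β} |ξ_1 − ξ_2|^β, with c_1, c_2 > 0, 0 < α ≤ min{1, p−1}, max{p, 2} ≤ β < ∞. Let ξ_1, ξ_2 ∈ ℝ^n and let V_1, V_2 ∈ L^p(Z; ℝ^n)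 satisfy ∫_Z V_i(z) dz = 0 and the orthogonality relations ∫_Z (a(y, z, ξ_i + V_i(z)), V_j(z)) dz = 0 for all i, j ∈ {1,2}. Define b(y, ξ_i) = (1/|Z|) ∫_Z a(y, z, ξ_i + V_i(z)) dz and γ = α/(β − α). Then there exists a constant c > 0, depending only on c_1, c_2, p, α, β and |Z|, such that |b(y, ξ_1) − b(y, ξ_2)| ≤ c (1 + |ξ_1| + |ξ_2|)^{p−1−γ} |ξ_1 − ξ_2|^γ. -/
open MeasureTheory
open scoped RealInnerProductSpace

/-!
Write `wᵢ = ξᵢ + Vᵢ`, `Aᵢ = a(y, ·, wᵢ)` and `θ = 1 + |w₁| + |w₂|`, and integrate against the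
normalized measure `volume[|Z]`, so that `b(y, ξᵢ) = ∫ Aᵢ`. As `Vⱼ` is orthogonal to every `Aᵢ`,
`∫ ⟪Aᵢ, wⱼ⟫ = ⟪b(y, ξᵢ), ξⱼ⟫`.

* For `i = j`, coercivity, the growth bound `|Aᵢ| ≤ c₁ (1 + |wᵢ|)^(p-1)` and Jensen give
  `P ≲ 1 + |ξᵢ| P^((p-1)/p)` for `P = ∫ (1 + |wᵢ|)^p`, hence the energy bound
  `∫ θ^p ≲ (1 + |ξ₁| + |ξ₂|)^p`.
* Strong monotonicity: `c₂ ∫ θ^(p-β) |w₁ - w₂|^β ≤ ∫ ⟪A₁ - A₂, w₁ - w₂⟫ ≤ B |ξ₁ - ξ₂|`, where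
  `B = |b(y, ξ₁) - b(y, ξ₂)|`.
* Hölder continuity: `B ≤ c₁ ∫ θ^(p-1-α) |w₁ - w₂|^α`, and Hölder's inequality with exponents
  `β/α`, `β/(β-α)` bounds this by `c₁ (∫ θ^(p-β) |w₁ - w₂|^β)^(α/β) (∫ θ^q)^(1-α/β)`, where
  `q = p - 1 - γ` and `∫ θ^q ≤ (∫ θ^p)^(q/p)`.

So `B ≲ (B |ξ₁ - ξ₂|)^(α/β) (1 + |ξ₁| + |ξ₂|)^(q (1-α/β))`, and since `α/β < 1` this solves to
`B ≲ (1 + |ξ₁| + |ξ₂|)^q |ξ₁ - ξ₂|^γ` with `γ = (α/β) / (1 - α/β)`.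
-/

lemma le_rpow_inv_one_sub_of_le_mul_rpow {x a θ : ℝ} (hx : 0 ≤ x) (ha : 0 ≤ a) (hθ : θ < 1)
    (h : x ≤ a * x ^ θ) : x ≤ a ^ (1 - θ)⁻¹ := by
  rcases hx.eq_or_lt with rfl | hx
  · positivity
  refine (Real.le_rpow_inv_iff_of_pos hx.le ha (sub_pos.2 hθ)).2 ?_
  rw [Real.rpow_sub hx, Real.rpow_one, div_le_iff₀ (Real.rpow_pos_of_pos hx θ)]
  exact h

lemma le_two_mul_add_rpow_of_le_add_mul_rpow {x a b θ : ℝ} (hx : 0 ≤ x) (ha : 0 ≤ a)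
    (hb : 0 ≤ b) (hθ : θ < 1) (h : x ≤ a + b * x ^ θ) :
    x ≤ 2 * a + (2 * b) ^ (1 - θ)⁻¹ := by
  have hpow : 0 ≤ (2 * b) ^ (1 - θ)⁻¹ := by positivity
  rcases le_total (b * x ^ θ) a with hsmall | hlarge
  · linarith
  · have : x ≤ 2 * b * x ^ θ := by linarith
    linarith [le_rpow_inv_one_sub_of_le_mul_rpow hx (by positivity) hθ this]

lemma le_mul_one_add_rpow_of_le_add_mul_rpow {x a b t p : ℝ} (hp : 1 ≤ p) (hx : 0 ≤ x)
    (ha : 0 ≤ a) (hb : 0 ≤ b) (ht : 0 ≤ t) (h : x ≤ a + b * t * x ^ ((p - 1) / p)) :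
    x ≤ (2 * a + (2 * b) ^ p) * (1 + t) ^ p := by
  have hp0 : 0 < p := by linarith
  have hexp : (1 - (p - 1) / p)⁻¹ = p := by field_simp; ring
  have h1 : 1 ≤ (1 + t) ^ p := Real.one_le_rpow (by linarith) hp0.le
  have h2 : t ^ p ≤ (1 + t) ^ p := by gcongr; linarith
  have h3 : 0 ≤ (2 * b) ^ p := by positivity
  calc x ≤ 2 * a + (2 * (b * t)) ^ (1 - (p - 1) / p)⁻¹ :=
        le_two_mul_add_rpow_of_le_add_mul_rpow hx ha (by positivity)
          (by rw [div_lt_one hp0]; linarith) h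
    _ = 2 * a + (2 * b) ^ p * t ^ p := by
        rw [hexp, ← mul_assoc, Real.mul_rpow (by positivity) ht]
    _ ≤ (2 * a + (2 * b) ^ p) * (1 + t) ^ p := by nlinarith

lemma le_mul_rpow_of_le_mul_rpow_mul_rpow {x y z c₁ c₂ t s : ℝ} (hx : 0 ≤ x) (hy : 0 ≤ y)
    (hz : 0 ≤ z) (hc₁ : 0 ≤ c₁) (hc₂ : 0 < c₂) (ht : 0 ≤ t) (hs0 : 0 < s) (hs1 : s < 1)
    (hxy : x ≤ c₁ * (y ^ s * z ^ (1 - s))) (hyx : c₂ * y ≤ x * t) :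
    x ≤ c₁ ^ (1 - s)⁻¹ * c₂ ^ (-(s * (1 - s)⁻¹)) * z * t ^ (s * (1 - s)⁻¹) := by
  have hy' : y ≤ x * t / c₂ := by rw [le_div_iff₀ hc₂]; linarith
  have key : x ≤ c₁ * (t / c₂) ^ s * z ^ (1 - s) * x ^ s :=
    calc x ≤ c₁ * ((x * t / c₂) ^ s * z ^ (1 - s)) := hxy.trans (by gcongr)
      _ = c₁ * (t / c₂) ^ s * z ^ (1 - s) * x ^ s := by
          rw [mul_div_assoc, Real.mul_rpow hx (by positivity)]; ring
  calc x ≤ (c₁ * (t / c₂) ^ s * z ^ (1 - s)) ^ (1 - s)⁻¹ :=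
        le_rpow_inv_one_sub_of_le_mul_rpow hx (by positivity) hs1 key
    _ = _ := by
        rw [Real.mul_rpow (by positivity) (by positivity), Real.mul_rpow hc₁ (by positivity),
          ← Real.rpow_mul (by positivity), ← Real.rpow_mul hz,
          mul_inv_cancel₀ (by linarith), Real.rpow_one, Real.div_rpow ht hc₂.le,
          Real.rpow_neg hc₂.le]
        ring

lemma sub_one_sub_div_sub_nonneg {p α β : ℝ} (hα : 0 < α) (hαp : α ≤ p - 1) (hpβ : p ≤ β) :
    0 ≤ p - 1 - α / (β - α) := by
  rw [sub_nonneg, div_le_iff₀ (by linarith)]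
  nlinarith

lemma two_rpow_neg_mul_rpow_sub_one_le {p β t : ℝ} (hp : 0 ≤ p) (hpβ : p ≤ β) (ht : 0 ≤ t) :
    2 ^ (-β) * (1 + t) ^ p - 1 ≤ (1 + t) ^ (p - β) * t ^ β := by
  have h1t : 0 < 1 + t := by linarith
  rcases le_total t 1 with ht1 | ht1
  · have : 2 ^ (-β) * (1 + t) ^ p ≤ 1 :=
      calc 2 ^ (-β) * (1 + t) ^ p ≤ 2 ^ (-β) * 2 ^ p := by gcongr; linarith
        _ = 2 ^ (p - β) := by rw [← Real.rpow_add two_pos]; ring_nf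
        _ ≤ 1 := Real.rpow_le_one_of_one_le_of_nonpos one_le_two (by linarith)
    linarith [show 0 ≤ (1 + t) ^ (p - β) * t ^ β by positivity]
  · calc 2 ^ (-β) * (1 + t) ^ p - 1 ≤ (1 + t) ^ (p - β) * ((1 + t) / 2) ^ β := by
          rw [Real.div_rpow h1t.le two_pos.le, Real.rpow_neg two_pos.le, mul_div,
            ← Real.rpow_add h1t]
          ring_nf; linarith
      _ ≤ (1 + t) ^ (p - β) * t ^ β := by gcongr <;> linarith

namespace MeasureTheory

variable {X : Type*} [MeasurableSpace X] {μ : Measure X} {f g : X → ℝ}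

lemma MemLp.integrable_rpow_of_nonneg {p : ℝ} (hp : 0 < p) (hf0 : ∀ x, 0 ≤ f x)
    (hf : MemLp f (ENNReal.ofReal p) μ) : Integrable (fun x => f x ^ p) μ := by
  refine (hf.integrable_norm_rpow (by simpa using hp) ENNReal.ofReal_ne_top).congr
    (ae_of_all _ fun x => ?_)
  simp only [ENNReal.toReal_ofReal hp.le, Real.norm_of_nonneg (hf0 x)]

lemma Integrable.rpow_of_one_le {p r : ℝ} (hf1 : ∀ x, 1 ≤ f x) (hfm : AEMeasurable f μ)
    (hfp : Integrable (fun x => f x ^ p) μ) (hrp : r ≤ p) : Integrable (fun x => f x ^ r) μ :=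
  hfp.mono' (hfm.pow_const r).aestronglyMeasurable <| ae_of_all _ fun x => by
    rw [Real.norm_of_nonneg (Real.rpow_nonneg (zero_le_one.trans (hf1 x)) r)]
    exact Real.rpow_le_rpow_of_exponent_le (hf1 x) hrp

lemma Integrable.memLp_rpow_of_nonneg {s : ℝ} (hs : 0 < s) (hf0 : ∀ x, 0 ≤ f x)
    (hf : Integrable f μ) : MemLp (fun x => f x ^ s) (ENNReal.ofReal s⁻¹) μ := by
  refine (integrable_norm_rpow_iff (hf.aemeasurable.pow_const s).aestronglyMeasurable
    (by simpa using hs) ENNReal.ofReal_ne_top).1 (hf.congr (ae_of_all _ fun x => ?_))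
  dsimp only
  rw [ENNReal.toReal_ofReal (inv_nonneg.2 hs.le), Real.norm_of_nonneg (Real.rpow_nonneg (hf0 x) s),
    ← Real.rpow_mul (hf0 x), mul_inv_cancel₀ hs.ne', Real.rpow_one]

lemma integral_rpow_mul_rpow_le {s : ℝ} (hs0 : 0 < s) (hs1 : s < 1) (hf0 : ∀ x, 0 ≤ f x)
    (hg0 : ∀ x, 0 ≤ g x) (hf : Integrable f μ) (hg : Integrable g μ) :
    ∫ x, f x ^ s * g x ^ (1 - s) ∂μ ≤ (∫ x, f x ∂μ) ^ s * (∫ x, g x ∂μ) ^ (1 - s) := by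
  have h := integral_mul_le_Lp_mul_Lq_of_nonneg (Real.HolderConjugate.inv_one_sub_inv hs0 hs1)
    (ae_of_all _ fun x => Real.rpow_nonneg (hf0 x) s)
    (ae_of_all _ fun x => Real.rpow_nonneg (hg0 x) (1 - s))
    (hf.memLp_rpow_of_nonneg hs0 hf0) (hg.memLp_rpow_of_nonneg (sub_pos.2 hs1) hg0)
  simp_rw [← Real.rpow_mul (hf0 _), ← Real.rpow_mul (hg0 _), mul_inv_cancel₀ hs0.ne',
    mul_inv_cancel₀ (sub_pos.2 hs1).ne', Real.rpow_one, one_div, inv_inv] at h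
  exact h

lemma integral_rpow_le_rpow_integral_rpow [IsProbabilityMeasure μ] {p r : ℝ} (hp : 0 < p)
    (hr : 0 ≤ r) (hrp : r ≤ p) (hf0 : ∀ x, 0 ≤ f x) (hfp : Integrable (fun x => f x ^ p) μ)
    (hfr : Integrable (fun x => f x ^ r) μ) :
    ∫ x, f x ^ r ∂μ ≤ (∫ x, f x ^ p ∂μ) ^ (r / p) := by
  have hpow : ∀ x, (f x ^ p) ^ (r / p) = f x ^ r := fun x => by
    rw [← Real.rpow_mul (hf0 x), mul_div_cancel₀ r hp.ne']
  have hrp' : r / p ≤ 1 := (div_le_one hp).2 hrp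
  simpa only [hpow] using (Real.concaveOn_rpow (div_nonneg hr hp.le) hrp').le_map_integral
    (Real.continuous_rpow_const (div_nonneg hr hp.le)).continuousOn isClosed_Ici
    (ae_of_all _ fun x => Real.rpow_nonneg (hf0 x) p) hfp (by simpa only [Function.comp_def, hpow])

lemma Integrable.rpow_mul_rpow_of_le {θ δ : X → ℝ} {p a b : ℝ}
    (hθp : Integrable (fun x => θ x ^ p) μ) (hθ1 : ∀ x, 1 ≤ θ x) (hδ0 : ∀ x, 0 ≤ δ x)
    (hδθ : ∀ x, δ x ≤ θ x) (hθm : AEMeasurable θ μ)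
    (hδm : AEMeasurable δ μ) (hb : 0 ≤ b) (hab : a + b ≤ p) :
    Integrable (fun x => θ x ^ a * δ x ^ b) μ := by
  refine hθp.mono' ((hθm.pow_const a).mul (hδm.pow_const b)).aestronglyMeasurable
    (ae_of_all _ fun x => ?_)
  have hθx : 0 < θ x := zero_lt_one.trans_le (hθ1 x)
  rw [Real.norm_of_nonneg (mul_nonneg (Real.rpow_nonneg hθx.le a) (Real.rpow_nonneg (hδ0 x) b))]
  calc θ x ^ a * δ x ^ b ≤ θ x ^ a * θ x ^ b :=
        mul_le_mul_of_nonneg_left (Real.rpow_le_rpow (hδ0 x) (hδθ x) hb) (Real.rpow_nonneg hθx.le a)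
    _ = θ x ^ (a + b) := (Real.rpow_add hθx a b).symm
    _ ≤ θ x ^ p := Real.rpow_le_rpow_of_exponent_le (hθ1 x) hab

lemma integral_rpow_mul_rpow_le_interpolation [IsProbabilityMeasure μ] {θ δ : X → ℝ}
    {p α β : ℝ} (hα : 0 < α) (hαp : α ≤ p - 1) (hpβ : p ≤ β) (hθp : Integrable (fun x => θ x ^ p) μ)
    (hθ1 : ∀ x, 1 ≤ θ x) (hδ0 : ∀ x, 0 ≤ δ x) (hδθ : ∀ x, δ x ≤ θ x) (hθm : AEMeasurable θ μ)
    (hδm : AEMeasurable δ μ) :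
    ∫ x, θ x ^ (p - 1 - α) * δ x ^ α ∂μ ≤ (∫ x, θ x ^ (p - β) * δ x ^ β ∂μ) ^ (α / β) *
      ((∫ x, θ x ^ p ∂μ) ^ ((p - 1 - α / (β - α)) / p)) ^ (1 - α / β) := by
  have hβα : 0 < β - α := by linarith
  have hβ : 0 < β := by linarith
  have hθ0 : ∀ x, 0 ≤ θ x := fun x => zero_le_one.trans (hθ1 x)
  set q := p - 1 - α / (β - α) with hq
  set s := α / β with hs
  have hq0 : 0 ≤ q := sub_one_sub_div_sub_nonneg hα hαp hpβ
  have hqp : q ≤ p := by linarith [div_pos hα hβα]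
  have hs0 : 0 < s := div_pos hα hβ
  have hs1 : s < 1 := (div_lt_one hβ).2 (by linarith)
  have hF0 : ∀ x, 0 ≤ θ x ^ (p - β) * δ x ^ β := fun x =>
    mul_nonneg (Real.rpow_nonneg (hθ0 x) _) (Real.rpow_nonneg (hδ0 x) _)
  -- the splitting `α = s β`, `p - 1 - α = s (p - β) + (1 - s) q` behind Hölder's inequality
  have hsplit : ∀ x, θ x ^ (p - 1 - α) * δ x ^ α =
      (θ x ^ (p - β) * δ x ^ β) ^ s * (θ x ^ q) ^ (1 - s) := fun x => by
    have hθx : 0 < θ x := zero_lt_one.trans_le (hθ1 x)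
    rw [Real.mul_rpow (Real.rpow_nonneg hθx.le _) (Real.rpow_nonneg (hδ0 x) _),
      ← Real.rpow_mul hθx.le, ← Real.rpow_mul (hδ0 x), ← Real.rpow_mul hθx.le, mul_right_comm,
      ← Real.rpow_add hθx]
    congr 2
    · rw [hq, hs]; field_simp; ring
    · rw [hs]; field_simp
  have hG := hθp.rpow_of_one_le hθ1 hθm hqp
  calc ∫ x, θ x ^ (p - 1 - α) * δ x ^ α ∂μ
      = ∫ x, (θ x ^ (p - β) * δ x ^ β) ^ s * (θ x ^ q) ^ (1 - s) ∂μ := by simp_rw [hsplit]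
    _ ≤ (∫ x, θ x ^ (p - β) * δ x ^ β ∂μ) ^ s * (∫ x, θ x ^ q ∂μ) ^ (1 - s) :=
        integral_rpow_mul_rpow_le hs0 hs1 hF0 (fun x => Real.rpow_nonneg (hθ0 x) _)
          (hθp.rpow_mul_rpow_of_le hθ1 hδ0 hδθ hθm hδm (by linarith) (by linarith)) hG
    _ ≤ (∫ x, θ x ^ (p - β) * δ x ^ β ∂μ) ^ s * ((∫ x, θ x ^ p ∂μ) ^ (q / p)) ^ (1 - s) := by
        have := integral_nonneg (μ := μ) (f := fun x => θ x ^ (p - β) * δ x ^ β) hF0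
        gcongr
        · exact integral_nonneg fun x => Real.rpow_nonneg (hθ0 x) _
        · exact integral_rpow_le_rpow_integral_rpow (by linarith) hq0 hqp hθ0 hθp hG

lemma MemLp.integrable_one_add_norm_rpow {E : Type*} [NormedAddCommGroup E] [IsFiniteMeasure μ]
    {w : X → E} {p r : ℝ}
    (hp : 0 < p) (hw : MemLp w (ENNReal.ofReal p) μ) (hrp : r ≤ p) :
    Integrable (fun z => (1 + ‖w z‖) ^ r) μ := by
  have h : MemLp (fun z => 1 + ‖w z‖) (ENNReal.ofReal p) μ := (memLp_const (1 : ℝ)).add hw.norm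
  exact (h.integrable_rpow_of_nonneg hp fun z => by positivity).rpow_of_one_le
    (fun z => le_add_of_nonneg_right (norm_nonneg _)) h.aestronglyMeasurable.aemeasurable hrp

lemma integral_one_add_norm_add_norm_rpow_le {E : Type*} [NormedAddCommGroup E] [IsFiniteMeasure μ]
    {w₁ w₂ : X → E} {ξ₁ ξ₂ : E}
    {p K : ℝ} (hp : 1 ≤ p) (hK : 0 ≤ K) (hw₁ : MemLp w₁ (ENNReal.ofReal p) μ)
    (hw₂ : MemLp w₂ (ENNReal.ofReal p) μ)
    (hθ : Integrable (fun z => (1 + ‖w₁ z‖ + ‖w₂ z‖) ^ p) μ)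
    (h₁ : ∫ z, (1 + ‖w₁ z‖) ^ p ∂μ ≤ K * (1 + ‖ξ₁‖) ^ p)
    (h₂ : ∫ z, (1 + ‖w₂ z‖) ^ p ∂μ ≤ K * (1 + ‖ξ₂‖) ^ p) :
    ∫ z, (1 + ‖w₁ z‖ + ‖w₂ z‖) ^ p ∂μ ≤ 2 ^ p * K * (1 + ‖ξ₁‖ + ‖ξ₂‖) ^ p := by
  have hp0 : 0 < p := by linarith
  have i₁ := hw₁.integrable_one_add_norm_rpow hp0 le_rfl
  have i₂ := hw₂.integrable_one_add_norm_rpow hp0 le_rfl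
  have hpt : ∀ z, (1 + ‖w₁ z‖ + ‖w₂ z‖) ^ p ≤
      2 ^ (p - 1) * ((1 + ‖w₁ z‖) ^ p + (1 + ‖w₂ z‖) ^ p) := fun z => by
    have h := NNReal.rpow_add_le_mul_rpow_add_rpow ⟨1 + ‖w₁ z‖, by positivity⟩
      ⟨1 + ‖w₂ z‖, by positivity⟩ hp
    calc (1 + ‖w₁ z‖ + ‖w₂ z‖) ^ p ≤ ((1 + ‖w₁ z‖) + (1 + ‖w₂ z‖)) ^ p := by
          gcongr; linarith
      _ ≤ _ := by exact_mod_cast h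
  calc ∫ z, (1 + ‖w₁ z‖ + ‖w₂ z‖) ^ p ∂μ
      ≤ ∫ z, 2 ^ (p - 1) * ((1 + ‖w₁ z‖) ^ p + (1 + ‖w₂ z‖) ^ p) ∂μ :=
        integral_mono hθ ((i₁.add i₂).const_mul _) hpt
    _ = 2 ^ (p - 1) * ((∫ z, (1 + ‖w₁ z‖) ^ p ∂μ) + ∫ z, (1 + ‖w₂ z‖) ^ p ∂μ) := by
        rw [integral_const_mul, integral_add i₁ i₂]
    _ ≤ 2 ^ (p - 1) * (K * (1 + ‖ξ₁‖ + ‖ξ₂‖) ^ p + K * (1 + ‖ξ₁‖ + ‖ξ₂‖) ^ p) := by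
        have hR₁ : (1 + ‖ξ₁‖) ^ p ≤ (1 + ‖ξ₁‖ + ‖ξ₂‖) ^ p :=
          Real.rpow_le_rpow (by positivity) (by linarith [norm_nonneg ξ₂]) hp0.le
        have hR₂ : (1 + ‖ξ₂‖) ^ p ≤ (1 + ‖ξ₁‖ + ‖ξ₂‖) ^ p :=
          Real.rpow_le_rpow (by positivity) (by linarith [norm_nonneg ξ₁]) hp0.le
        gcongr
        exacts [h₁.trans (mul_le_mul_of_nonneg_left hR₁ hK),
          h₂.trans (mul_le_mul_of_nonneg_left hR₂ hK)]
    _ = 2 ^ p * K * (1 + ‖ξ₁‖ + ‖ξ₂‖) ^ p := by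
        rw [Real.rpow_sub_one two_ne_zero]; ring

end MeasureTheory

namespace ProbabilityTheory

variable {X : Type*} [MeasurableSpace X]

lemma integral_cond {F : Type*} [NormedAddCommGroup F] [NormedSpace ℝ F]
    (μ : Measure X) (s : Set X) (f : X → F) :
    ∫ x, f x ∂(cond μ s) = (μ s).toReal⁻¹ • ∫ x in s, f x ∂μ := by
  rw [cond, integral_smul_measure, ENNReal.toReal_inv]

end ProbabilityTheory

section InnerProductSpace

variable {X E : Type*} [MeasurableSpace X] [NormedAddCommGroup E] [InnerProductSpace ℝ E]
  {μ : Measure X}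

def InnerOrthogonal (μ : Measure X) (A V : X → E) : Prop :=
  Integrable (fun z => ⟪A z, V z⟫) μ ∧ ∫ z, ⟪A z, V z⟫ ∂μ = 0

namespace InnerOrthogonal

variable {A A₁ A₂ V V₁ V₂ : X → E}

lemma sub_left (h₁ : InnerOrthogonal μ A₁ V) (h₂ : InnerOrthogonal μ A₂ V) :
    InnerOrthogonal μ (A₁ - A₂) V := by
  simp only [InnerOrthogonal, Pi.sub_apply, inner_sub_left]
  exact ⟨h₁.1.sub h₂.1, by rw [integral_sub h₁.1 h₂.1, h₁.2, h₂.2, sub_zero]⟩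

lemma sub_right (h₁ : InnerOrthogonal μ A V₁) (h₂ : InnerOrthogonal μ A V₂) :
    InnerOrthogonal μ A (V₁ - V₂) := by
  simp only [InnerOrthogonal, Pi.sub_apply, inner_sub_right]
  exact ⟨h₁.1.sub h₂.1, by rw [integral_sub h₁.1 h₂.1, h₁.2, h₂.2, sub_zero]⟩

lemma integrable_inner_add (h : InnerOrthogonal μ A V) (hA : Integrable A μ) (ξ : E) :
    Integrable (fun z => ⟪A z, ξ + V z⟫) μ := by
  simp only [inner_add_right]
  exact (hA.inner_const ξ).add h.1

lemma integral_inner_add [CompleteSpace E] (h : InnerOrthogonal μ A V) (hA : Integrable A μ)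
    (ξ : E) : ∫ z, ⟪A z, ξ + V z⟫ ∂μ = ⟪∫ z, A z ∂μ, ξ⟫ := by
  simp only [inner_add_right]
  rw [integral_add (hA.inner_const ξ) h.1, h.2, add_zero, real_inner_comm, ← integral_inner hA]
  simp only [real_inner_comm]

end InnerOrthogonal

structure StructureConditions (μ : Measure X) (a : X → E → E) (p c₁ c₂ α β : ℝ) : Prop where
  map_zero : ∀ᵐ z ∂μ, a z 0 = 0
  holder : ∀ᵐ z ∂μ, ∀ ξ η,
    ‖a z ξ - a z η‖ ≤ c₁ * (1 + ‖ξ‖ + ‖η‖) ^ (p - 1 - α) * ‖ξ - η‖ ^ α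
  monotone : ∀ᵐ z ∂μ, ∀ ξ η,
    c₂ * (1 + ‖ξ‖ + ‖η‖) ^ (p - β) * ‖ξ - η‖ ^ β ≤ ⟪a z ξ - a z η, ξ - η⟫

namespace StructureConditions

variable {a : X → E → E} {p c₁ c₂ α β : ℝ}

lemma norm_le (ha : StructureConditions μ a p c₁ c₂ α β) (hc₁ : 0 ≤ c₁) (hα : 0 ≤ α) :
    ∀ᵐ z ∂μ, ∀ ξ, ‖a z ξ‖ ≤ c₁ * (1 + ‖ξ‖) ^ (p - 1) := by
  filter_upwards [ha.map_zero, ha.holder] with z h0 hz ξ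
  have h1 : 0 < 1 + ‖ξ‖ := by positivity
  calc ‖a z ξ‖ ≤ c₁ * (1 + ‖ξ‖) ^ (p - 1 - α) * ‖ξ‖ ^ α := by simpa [h0] using hz ξ 0
    _ ≤ c₁ * (1 + ‖ξ‖) ^ (p - 1 - α) * (1 + ‖ξ‖) ^ α := by gcongr; linarith
    _ = c₁ * (1 + ‖ξ‖) ^ (p - 1) := by rw [mul_assoc, ← Real.rpow_add h1, sub_add_cancel]

lemma coercive (ha : StructureConditions μ a p c₁ c₂ α β) :
    ∀ᵐ z ∂μ, ∀ ξ, c₂ * (1 + ‖ξ‖) ^ (p - β) * ‖ξ‖ ^ β ≤ ⟪a z ξ, ξ⟫ := by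
  filter_upwards [ha.map_zero, ha.monotone] with z h0 hz ξ
  simpa [h0] using hz ξ 0

lemma integrable_comp [IsFiniteMeasure μ] (ha : StructureConditions μ a p c₁ c₂ α β)
    (hp : 1 ≤ p) (hc₁ : 0 ≤ c₁) (hα : 0 ≤ α) {w : X → E} (hw : MemLp w (ENNReal.ofReal p) μ)
    (hA : AEStronglyMeasurable (fun z => a z (w z)) μ) : Integrable (fun z => a z (w z)) μ :=
  ((hw.integrable_one_add_norm_rpow (by linarith) (by linarith : p - 1 ≤ p)).const_mul c₁).mono'
    hA (by filter_upwards [ha.norm_le hc₁ hα] with z hz using hz (w z))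

lemma norm_integral_comp_le [IsProbabilityMeasure μ] (ha : StructureConditions μ a p c₁ c₂ α β)
    (hp : 1 ≤ p) (hc₁ : 0 ≤ c₁) (hα : 0 ≤ α) {w : X → E} (hw : MemLp w (ENNReal.ofReal p) μ)
    (hA : AEStronglyMeasurable (fun z => a z (w z)) μ) :
    ‖∫ z, a z (w z) ∂μ‖ ≤ c₁ * (∫ z, (1 + ‖w z‖) ^ p ∂μ) ^ ((p - 1) / p) := by
  have hp0 : 0 < p := by linarith
  have hw' := hw.integrable_one_add_norm_rpow hp0 (by linarith : p - 1 ≤ p)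
  calc ‖∫ z, a z (w z) ∂μ‖ ≤ ∫ z, c₁ * (1 + ‖w z‖) ^ (p - 1) ∂μ :=
        (norm_integral_le_integral_norm _).trans (integral_mono_ae
          (ha.integrable_comp hp hc₁ hα hw hA).norm (hw'.const_mul c₁)
          (by filter_upwards [ha.norm_le hc₁ hα] with z hz using hz _))
    _ ≤ c₁ * (∫ z, (1 + ‖w z‖) ^ p ∂μ) ^ ((p - 1) / p) := by
        rw [integral_const_mul]
        gcongr
        exact integral_rpow_le_rpow_integral_rpow hp0 (by linarith) (by linarith)
          (fun z => by positivity) (hw.integrable_one_add_norm_rpow hp0 le_rfl) hw'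

lemma le_integral_inner_comp [IsProbabilityMeasure μ] (ha : StructureConditions μ a p c₁ c₂ α β)
    (hp : 0 ≤ p) (hpβ : p ≤ β) (hc₂ : 0 ≤ c₂) {w : X → E}
    (hw : Integrable (fun z => (1 + ‖w z‖) ^ p) μ)
    (hAw : Integrable (fun z => ⟪a z (w z), w z⟫) μ) :
    c₂ * (2 ^ (-β) * ∫ z, (1 + ‖w z‖) ^ p ∂μ - 1) ≤ ∫ z, ⟪a z (w z), w z⟫ ∂μ := by
  calc c₂ * (2 ^ (-β) * ∫ z, (1 + ‖w z‖) ^ p ∂μ - 1)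
      = ∫ z, c₂ * (2 ^ (-β) * (1 + ‖w z‖) ^ p - 1) ∂μ := by
        rw [integral_const_mul, integral_sub (hw.const_mul _) (integrable_const 1),
          integral_const_mul]
        simp
    _ ≤ ∫ z, ⟪a z (w z), w z⟫ ∂μ := by
        refine integral_mono_ae (((hw.const_mul _).sub (integrable_const 1)).const_mul _) hAw ?_
        filter_upwards [ha.coercive] with z hz
        calc _ ≤ c₂ * ((1 + ‖w z‖) ^ (p - β) * ‖w z‖ ^ β) := by
              gcongr; exact two_rpow_neg_mul_rpow_sub_one_le hp hpβ (norm_nonneg _)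
          _ ≤ _ := by rw [← mul_assoc]; exact hz _

theorem integral_one_add_norm_rpow_le [IsProbabilityMeasure μ] [CompleteSpace E]
    (ha : StructureConditions μ a p c₁ c₂ α β) (hp : 1 ≤ p) (hpβ : p ≤ β) (hc₁ : 0 ≤ c₁)
    (hc₂ : 0 < c₂) (hα : 0 ≤ α) {ξ : E} {V : X → E} (hV : MemLp V (ENNReal.ofReal p) μ)
    (hA : AEStronglyMeasurable (fun z => a z (ξ + V z)) μ)
    (horth : InnerOrthogonal μ (fun z => a z (ξ + V z)) V) :
    ∫ z, (1 + ‖ξ + V z‖) ^ p ∂μ ≤ (2 * 2 ^ β + (2 * 2 ^ β * c₁ / c₂) ^ p) * (1 + ‖ξ‖) ^ p := by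
  have hw : MemLp (fun z => ξ + V z) (ENNReal.ofReal p) μ := (memLp_const ξ).add hV
  have hAi := ha.integrable_comp hp hc₁ hα hw hA
  have hPi := hw.integrable_one_add_norm_rpow (by linarith) le_rfl
  set P := ∫ z, (1 + ‖ξ + V z‖) ^ p ∂μ
  have hbound : c₂ * (2 ^ (-β) * P - 1) ≤ c₁ * P ^ ((p - 1) / p) * ‖ξ‖ :=
    calc c₂ * (2 ^ (-β) * P - 1) ≤ ∫ z, ⟪a z (ξ + V z), ξ + V z⟫ ∂μ :=
          ha.le_integral_inner_comp (by linarith) hpβ hc₂.le hPi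
            (horth.integrable_inner_add hAi ξ)
      _ = ⟪∫ z, a z (ξ + V z) ∂μ, ξ⟫ := horth.integral_inner_add hAi ξ
      _ ≤ c₁ * P ^ ((p - 1) / p) * ‖ξ‖ := (real_inner_le_norm _ _).trans
          (mul_le_mul_of_nonneg_right (ha.norm_integral_comp_le hp hc₁ hα hw hA) (norm_nonneg _))
  have key : P ≤ 2 ^ β + 2 ^ β * c₁ / c₂ * ‖ξ‖ * P ^ ((p - 1) / p) := by
    rw [Real.rpow_neg zero_le_two] at hbound
    have h2β : (0 : ℝ) < 2 ^ β := by positivity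
    field_simp at hbound ⊢
    linarith
  convert le_mul_one_add_rpow_of_le_add_mul_rpow hp (integral_nonneg fun z => by positivity)
    (by positivity) (by positivity) (norm_nonneg _) key using 4
  ring

end StructureConditions

theorem norm_integral_le_of_holder_of_monotone [IsProbabilityMeasure μ] [CompleteSpace E]
    {p c₁ c₂ α β : ℝ} (hα : 0 < α) (hαp : α ≤ p - 1) (hpβ : p ≤ β) (hc₁ : 0 ≤ c₁) (hc₂ : 0 < c₂)
    {D V : X → E} {θ : X → ℝ} {ζ : E} (hD : Integrable D μ) (hV : AEStronglyMeasurable V μ)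
    (horth : InnerOrthogonal μ D V) (hθm : AEMeasurable θ μ) (hθ1 : ∀ z, 1 ≤ θ z)
    (hθp : Integrable (fun z => θ z ^ p) μ) (hθ : ∀ z, ‖ζ + V z‖ ≤ θ z)
    (hholder : ∀ᵐ z ∂μ, ‖D z‖ ≤ c₁ * θ z ^ (p - 1 - α) * ‖ζ + V z‖ ^ α)
    (hmono : ∀ᵐ z ∂μ, c₂ * θ z ^ (p - β) * ‖ζ + V z‖ ^ β ≤ ⟪D z, ζ + V z⟫) :
    ‖∫ z, D z ∂μ‖ ≤ c₁ ^ (β / (β - α)) * c₂ ^ (-(α / (β - α))) *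
      (∫ z, θ z ^ p ∂μ) ^ ((p - 1 - α / (β - α)) / p) * ‖ζ‖ ^ (α / (β - α)) := by
  have hβ : 0 < β := by linarith
  have hδm : AEMeasurable (fun z => ‖ζ + V z‖) μ := (hV.const_add ζ).norm.aemeasurable
  have hT : ‖∫ z, D z ∂μ‖ ≤ c₁ * ∫ z, θ z ^ (p - 1 - α) * ‖ζ + V z‖ ^ α ∂μ := by
    rw [← integral_const_mul]
    refine (norm_integral_le_integral_norm _).trans (integral_mono_ae hD.norm
      ((hθp.rpow_mul_rpow_of_le hθ1 (fun _ => norm_nonneg _) hθ hθm hδm hα.le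
        (by linarith)).const_mul _) ?_)
    filter_upwards [hholder] with z hz
    rwa [← mul_assoc]
  have hS : c₂ * ∫ z, θ z ^ (p - β) * ‖ζ + V z‖ ^ β ∂μ ≤ ‖∫ z, D z ∂μ‖ * ‖ζ‖ := by
    rw [← integral_const_mul]
    calc _ ≤ ∫ z, ⟪D z, ζ + V z⟫ ∂μ := by
          refine integral_mono_ae ((hθp.rpow_mul_rpow_of_le hθ1 (fun _ => norm_nonneg _) hθ hθm
            hδm hβ.le (by linarith)).const_mul _) (horth.integrable_inner_add hD ζ) ?_
          filter_upwards [hmono] with z hz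
          rwa [← mul_assoc]
      _ = ⟪∫ z, D z ∂μ, ζ⟫ := horth.integral_inner_add hD ζ
      _ ≤ _ := real_inner_le_norm _ _
  have hI := integral_rpow_mul_rpow_le_interpolation (δ := fun z => ‖ζ + V z‖) hα hαp hpβ hθp
    hθ1 (fun _ => norm_nonneg _) hθ hθm hδm
  have hθ0 : ∀ z, 0 ≤ θ z := fun z => zero_le_one.trans (hθ1 z)
  have h := le_mul_rpow_of_le_mul_rpow_mul_rpow (norm_nonneg _)
    (integral_nonneg fun z => mul_nonneg (Real.rpow_nonneg (hθ0 z) _) (by positivity))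
    (Real.rpow_nonneg (integral_nonneg fun z => Real.rpow_nonneg (hθ0 z) _) _) hc₁ hc₂
    (norm_nonneg _) (div_pos hα hβ) ((div_lt_one hβ).2 (by linarith)) (hT.trans (by gcongr)) hS
  have hexp : (1 - α / β)⁻¹ = β / (β - α) := by field_simp
  rwa [hexp, div_mul_div_comm, mul_comm β, mul_div_mul_right _ _ hβ.ne'] at h

/-- `2 ^ p * (2 * 2 ^ β + (2 * 2 ^ β * c₁ / c₂) ^ p)` is the energy bound of
`∫ (1 + ‖ξ₁ + V₁‖ + ‖ξ₂ + V₂‖) ^ p` in units of `(1 + ‖ξ₁‖ + ‖ξ₂‖) ^ p`. -/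
noncomputable def homogenizedHolderConst (p c₁ c₂ α β : ℝ) : ℝ :=
  c₁ ^ (β / (β - α)) * c₂ ^ (-(α / (β - α))) *
    (2 ^ p * (2 * 2 ^ β + (2 * 2 ^ β * c₁ / c₂) ^ p)) ^ ((p - 1 - α / (β - α)) / p)

theorem StructureConditions.norm_integral_sub_integral_le [IsProbabilityMeasure μ] [CompleteSpace E]
    {a : X → E → E} {p c₁ c₂ α β : ℝ} (ha : StructureConditions μ a p c₁ c₂ α β)
    (hc₁ : 0 ≤ c₁) (hc₂ : 0 < c₂) (hα : 0 < α) (hαp : α ≤ p - 1) (hpβ : p ≤ β)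
    {ξ₁ ξ₂ : E} {V₁ V₂ : X → E}
    (hV₁ : MemLp V₁ (ENNReal.ofReal p) μ) (hV₂ : MemLp V₂ (ENNReal.ofReal p) μ)
    (hA₁ : AEStronglyMeasurable (fun z => a z (ξ₁ + V₁ z)) μ)
    (hA₂ : AEStronglyMeasurable (fun z => a z (ξ₂ + V₂ z)) μ)
    (h₁₁ : InnerOrthogonal μ (fun z => a z (ξ₁ + V₁ z)) V₁)
    (h₁₂ : InnerOrthogonal μ (fun z => a z (ξ₁ + V₁ z)) V₂)
    (h₂₁ : InnerOrthogonal μ (fun z => a z (ξ₂ + V₂ z)) V₁)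
    (h₂₂ : InnerOrthogonal μ (fun z => a z (ξ₂ + V₂ z)) V₂) :
    ‖(∫ z, a z (ξ₁ + V₁ z) ∂μ) - ∫ z, a z (ξ₂ + V₂ z) ∂μ‖ ≤
      homogenizedHolderConst p c₁ c₂ α β * (1 + ‖ξ₁‖ + ‖ξ₂‖) ^ (p - 1 - α / (β - α)) *
        ‖ξ₁ - ξ₂‖ ^ (α / (β - α)) := by
  have hp : 1 ≤ p := by linarith
  have hw₁ : MemLp (fun z => ξ₁ + V₁ z) (ENNReal.ofReal p) μ := (memLp_const ξ₁).add hV₁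
  have hw₂ : MemLp (fun z => ξ₂ + V₂ z) (ENNReal.ofReal p) μ := (memLp_const ξ₂).add hV₂
  have hA₁i := ha.integrable_comp hp hc₁ hα.le hw₁ hA₁
  have hA₂i := ha.integrable_comp hp hc₁ hα.le hw₂ hA₂
  have hθ : MemLp (fun z => 1 + ‖ξ₁ + V₁ z‖ + ‖ξ₂ + V₂ z‖) (ENNReal.ofReal p) μ :=
    ((memLp_const (1 : ℝ)).add hw₁.norm).add hw₂.norm
  have hθp := hθ.integrable_rpow_of_nonneg (by linarith) fun z => by positivity
  have hM := integral_one_add_norm_add_norm_rpow_le hp (by positivity) hw₁ hw₂ hθp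
    (ha.integral_one_add_norm_rpow_le hp hpβ hc₁ hc₂ hα.le hV₁ hA₁ h₁₁)
    (ha.integral_one_add_norm_rpow_le hp hpβ hc₁ hc₂ hα.le hV₂ hA₂ h₂₂)
  have hsplit : ∀ z, ξ₁ + V₁ z - (ξ₂ + V₂ z) = ξ₁ - ξ₂ + (V₁ - V₂) z :=
    fun z => add_sub_add_comm _ _ _ _
  have hest := norm_integral_le_of_holder_of_monotone hα hαp hpβ hc₁ hc₂ (hA₁i.sub hA₂i)
    (hV₁.1.sub hV₂.1) ((h₁₁.sub_right h₁₂).sub_left (h₂₁.sub_right h₂₂))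
    hθ.aestronglyMeasurable.aemeasurable
    (fun z => by rw [add_assoc]; exact le_add_of_nonneg_right (by positivity))
    hθp (fun z => by rw [← hsplit]; exact (norm_sub_le _ _).trans (by linarith))
    (by filter_upwards [ha.holder] with z hz; rw [← hsplit]; exact hz _ _)
    (by filter_upwards [ha.monotone] with z hz; rw [← hsplit]; exact hz _ _)
  have hq := div_nonneg (sub_one_sub_div_sub_nonneg hα hαp hpβ) (by linarith : (0 : ℝ) ≤ p)
  rw [← integral_sub hA₁i hA₂i]
  set K := 2 * 2 ^ β + (2 * 2 ^ β * c₁ / c₂) ^ p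
  set R := 1 + ‖ξ₁‖ + ‖ξ₂‖
  calc _ ≤ c₁ ^ (β / (β - α)) * c₂ ^ (-(α / (β - α))) *
        (2 ^ p * K * R ^ p) ^ ((p - 1 - α / (β - α)) / p) * ‖ξ₁ - ξ₂‖ ^ (α / (β - α)) :=
        hest.trans (by gcongr)
    _ = _ := by
        rw [Real.mul_rpow (by positivity) (by positivity), ← Real.rpow_mul (by positivity),
          mul_div_cancel₀ _ (by linarith)]
        unfold homogenizedHolderConst
        ring

end InnerProductSpace

theorem homogenized_operator_holder_continuous_general
    {n : ℕ} (p : ℝ)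
    (c₁ c₂ α β : ℝ) (hc₁ : 0 < c₁) (hc₂ : 0 < c₂)
    (hα0 : 0 < α) (hα : α ≤ min 1 (p - 1)) (hβ : max p 2 ≤ β)
    (Z : Set (EuclideanSpace ℝ (Fin n))) :
    ∃ c : ℝ, 0 < c ∧
      ∀ (y : EuclideanSpace ℝ (Fin n))
        (a : EuclideanSpace ℝ (Fin n) → EuclideanSpace ℝ (Fin n) →
          EuclideanSpace ℝ (Fin n) → EuclideanSpace ℝ (Fin n)),
        (∀ᵐ z : EuclideanSpace ℝ (Fin n) ∂volume, a y z 0 = 0) →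
        (∀ᵐ z : EuclideanSpace ℝ (Fin n) ∂volume,
          ∀ ξ₁ ξ₂ : EuclideanSpace ℝ (Fin n),
            ‖a y z ξ₁ - a y z ξ₂‖ ≤
              c₁ * (1 + ‖ξ₁‖ + ‖ξ₂‖) ^ (p - 1 - α) * ‖ξ₁ - ξ₂‖ ^ α) →
        (∀ᵐ z : EuclideanSpace ℝ (Fin n) ∂volume,
          ∀ ξ₁ ξ₂ : EuclideanSpace ℝ (Fin n),
            ⟪a y z ξ₁ - a y z ξ₂, ξ₁ - ξ₂⟫ ≥
              c₂ * (1 + ‖ξ₁‖ + ‖ξ₂‖) ^ (p - β) * ‖ξ₁ - ξ₂‖ ^ β) →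
        ∀ (ξ₁ ξ₂ : EuclideanSpace ℝ (Fin n))
          (V₁ V₂ : EuclideanSpace ℝ (Fin n) → EuclideanSpace ℝ (Fin n)),
          MemLp V₁ (ENNReal.ofReal p) (volume.restrict Z) →
          MemLp V₂ (ENNReal.ofReal p) (volume.restrict Z) →
          -- mean value zero
          (∫ z in Z, V₁ z) = 0 →
          (∫ z in Z, V₂ z) = 0 →
          -- measurability of the composed coefficients
          AEStronglyMeasurable (fun z => a y z (ξ₁ + V₁ z)) (volume.restrict Z) →
          AEStronglyMeasurable (fun z => a y z (ξ₂ + V₂ z)) (volume.restrict Z) →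
          -- orthogonality relations
          Integrable (fun z => ⟪a y z (ξ₁ + V₁ z), V₁ z⟫) (volume.restrict Z) →
          Integrable (fun z => ⟪a y z (ξ₁ + V₁ z), V₂ z⟫) (volume.restrict Z) →
          Integrable (fun z => ⟪a y z (ξ₂ + V₂ z), V₁ z⟫) (volume.restrict Z) →
          Integrable (fun z => ⟪a y z (ξ₂ + V₂ z), V₂ z⟫) (volume.restrict Z) →
          (∫ z in Z, ⟪a y z (ξ₁ + V₁ z), V₁ z⟫) = 0 →
          (∫ z in Z, ⟪a y z (ξ₁ + V₁ z), V₂ z⟫) = 0 →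
          (∫ z in Z, ⟪a y z (ξ₂ + V₂ z), V₁ z⟫) = 0 →
          (∫ z in Z, ⟪a y z (ξ₂ + V₂ z), V₂ z⟫) = 0 →
          ‖((volume Z).toReal⁻¹ • ∫ z in Z, a y z (ξ₁ + V₁ z)) -
              (volume Z).toReal⁻¹ • ∫ z in Z, a y z (ξ₂ + V₂ z)‖ ≤
            c * (1 + ‖ξ₁‖ + ‖ξ₂‖) ^ (p - 1 - α / (β - α)) *
              ‖ξ₁ - ξ₂‖ ^ (α / (β - α)) := by
  refine ⟨homogenizedHolderConst p c₁ c₂ α β, by unfold homogenizedHolderConst; positivity, ?_⟩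
  intro y a h0 hholder hmono ξ₁ ξ₂ V₁ V₂ hV₁ hV₂ _ _ hA₁ hA₂ hi₁₁ hi₁₂ hi₂₁ hi₂₂ ho₁₁ ho₁₂ ho₂₁ ho₂₂
  by_cases hZ : volume Z = 0 ∨ volume Z = ⊤
  -- then the normalizing factor `(volume Z).toReal⁻¹` is the junk value `0`
  · rw [(ENNReal.toReal_eq_zero_iff _).2 hZ, inv_zero, zero_smul, zero_smul, sub_zero, norm_zero]
    unfold homogenizedHolderConst
    positivity
  rw [not_or] at hZ
  have := ProbabilityTheory.cond_isProbabilityMeasure_of_finite hZ.1 hZ.2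
  have hc : (volume Z)⁻¹ ≠ ⊤ := ENNReal.inv_ne_top.2 hZ.1
  have ae_cond : ∀ {P : EuclideanSpace ℝ (Fin n) → Prop}, (∀ᵐ z, P z) →
      ∀ᵐ z ∂(ProbabilityTheory.cond volume Z), P z :=
    fun h => ProbabilityTheory.cond_absolutelyContinuous.ae_le h
  have orth : ∀ {A V : EuclideanSpace ℝ (Fin n) → EuclideanSpace ℝ (Fin n)},
      Integrable (fun z => ⟪A z, V z⟫) (volume.restrict Z) → ∫ z in Z, ⟪A z, V z⟫ = 0 →
      InnerOrthogonal (ProbabilityTheory.cond volume Z) A V := fun hi ho =>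
    ⟨hi.smul_measure hc, by rw [ProbabilityTheory.integral_cond, ho, smul_zero]⟩
  have ha : StructureConditions (ProbabilityTheory.cond volume Z) (a y) p c₁ c₂ α β :=
    ⟨ae_cond h0, ae_cond hholder, ae_cond hmono⟩
  simpa only [ProbabilityTheory.integral_cond] using
    ha.norm_integral_sub_integral_le hc₁.le hc₂ hα0 (hα.trans (min_le_right _ _))
      ((le_max_left _ _).trans hβ) (hV₁.smul_measure hc) (hV₂.smul_measure hc)
      (hA₁.smul_measure _) (hA₂.smul_measure _) (orth hi₁₁ ho₁₁) (orth hi₁₂ ho₁₂)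
      (orth hi₂₁ ho₂₁) (orth hi₂₂ ho₂₂)

/-- Hölder continuity of the homogenized operator (part (iii) of the
Proposition): with `Vᵢ` the cell-problem data at `ξᵢ` (mean zero, orthogonality
relations), `b(y, ξᵢ) = (1/|Z|) ∫_Z a(y, z, ξᵢ + Vᵢ(z)) dz` and `γ = α/(β − α)`,
one has `|b(y,ξ₁) − b(y,ξ₂)| ≤ c (1 + |ξ₁| + |ξ₂|)^{p−1−γ} |ξ₁ − ξ₂|^γ` for a constant
`c` depending only on `c₁, c₂, p, α, β, |Z|`. -/
theorem homogenized_operator_holder_continuous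
    {n : ℕ} (p : ℝ) (hp : 1 < p)
    (c₁ c₂ α β : ℝ) (hc₁ : 0 < c₁) (hc₂ : 0 < c₂)
    (hα0 : 0 < α) (hα : α ≤ min 1 (p - 1)) (hβ : max p 2 ≤ β)
    (l L : Fin n → ℝ) (hlL : ∀ i, l i < L i)
    (Z : Set (EuclideanSpace ℝ (Fin n)))
    (hZ : Z = {x : EuclideanSpace ℝ (Fin n) | ∀ i, x i ∈ Set.Ioo (l i) (L i)}) :
    ∃ c : ℝ, 0 < c ∧
      ∀ (y : EuclideanSpace ℝ (Fin n))
        (a : EuclideanSpace ℝ (Fin n) → EuclideanSpace ℝ (Fin n) →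
          EuclideanSpace ℝ (Fin n) → EuclideanSpace ℝ (Fin n)),
        (∀ᵐ z : EuclideanSpace ℝ (Fin n) ∂volume, a y z 0 = 0) →
        (∀ᵐ z : EuclideanSpace ℝ (Fin n) ∂volume,
          ∀ ξ₁ ξ₂ : EuclideanSpace ℝ (Fin n),
            ‖a y z ξ₁ - a y z ξ₂‖ ≤
              c₁ * (1 + ‖ξ₁‖ + ‖ξ₂‖) ^ (p - 1 - α) * ‖ξ₁ - ξ₂‖ ^ α) →
        (∀ᵐ z : EuclideanSpace ℝ (Fin n) ∂volume,
          ∀ ξ₁ ξ₂ : EuclideanSpace ℝ (Fin n),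
            ⟪a y z ξ₁ - a y z ξ₂, ξ₁ - ξ₂⟫ ≥
              c₂ * (1 + ‖ξ₁‖ + ‖ξ₂‖) ^ (p - β) * ‖ξ₁ - ξ₂‖ ^ β) →
        ∀ (ξ₁ ξ₂ : EuclideanSpace ℝ (Fin n))
          (V₁ V₂ : EuclideanSpace ℝ (Fin n) → EuclideanSpace ℝ (Fin n)),
          MemLp V₁ (ENNReal.ofReal p) (volume.restrict Z) →
          MemLp V₂ (ENNReal.ofReal p) (volume.restrict Z) →
          -- mean value zero
          (∫ z in Z, V₁ z) = 0 →
          (∫ z in Z, V₂ z) = 0 →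
          -- measurability of the composed coefficients
          AEStronglyMeasurable (fun z => a y z (ξ₁ + V₁ z)) (volume.restrict Z) →
          AEStronglyMeasurable (fun z => a y z (ξ₂ + V₂ z)) (volume.restrict Z) →
          -- orthogonality relations
          Integrable (fun z => ⟪a y z (ξ₁ + V₁ z), V₁ z⟫) (volume.restrict Z) →
          Integrable (fun z => ⟪a y z (ξ₁ + V₁ z), V₂ z⟫) (volume.restrict Z) →
          Integrable (fun z => ⟪a y z (ξ₂ + V₂ z), V₁ z⟫) (volume.restrict Z) →
          Integrable (fun z => ⟪a y z (ξ₂ + V₂ z), V₂ z⟫) (volume.restrict Z) →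
          (∫ z in Z, ⟪a y z (ξ₁ + V₁ z), V₁ z⟫) = 0 →
          (∫ z in Z, ⟪a y z (ξ₁ + V₁ z), V₂ z⟫) = 0 →
          (∫ z in Z, ⟪a y z (ξ₂ + V₂ z), V₁ z⟫) = 0 →
          (∫ z in Z, ⟪a y z (ξ₂ + V₂ z), V₂ z⟫) = 0 →
          ‖((volume Z).toReal⁻¹ • ∫ z in Z, a y z (ξ₁ + V₁ z)) -
              (volume Z).toReal⁻¹ • ∫ z in Z, a y z (ξ₂ + V₂ z)‖ ≤
            c * (1 + ‖ξ₁‖ + ‖ξ₂‖) ^ (p - 1 - α / (β - α)) *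
              ‖ξ₁ - ξ₂‖ ^ (α / (β - α)) :=
  homogenized_operator_holder_continuous_general p c₁ c₂ α β hc₁ hc₂ hα0 hα hβ Z
end
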